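/- arXiv:2406.03972 — 10 statements merged into one kernel-verified Lean document; each statement's English description precedes it below -/
import Mathlib

section
/- Let H : ℝ → Matrix n n ℂ be a path of Hermitian matrices that is differentiable at s₀, let ω0 : ℝ → ℝ be continuous with ω0(s) an eigenvalue of H(s) for s near s₀, and let Δ > 0 be such that the spectrum of H(s₀) intersected with the closed interval [ω0(s₀) − Δ, ω0(s₀) + Δ] equals {ω0(s₀)}. Let P : ℝ → Matrix n n ℂ be differentiable at s₀, where for each s near s₀, P(s) is the orthogonal projection onto the eigenspace of H(s) for the eigenvalue ω0(s). Then ‖P'(s₀)‖ ≤ 2·‖H'(s₀)‖/Δ. -/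
open scoped Matrix.Norms.L2Operator Topology

/-!
Write `P₀ = P s₀` and `H₀ = H s₀`. Differentiating `P² = P` gives `P' = P' P₀ + P₀ P'` and
`P₀ P' P₀ = 0`; since `P'` is Hermitian, `P₀ P' = (P' P₀)ᴴ`, so `‖P'‖ ≤ 2 ‖P' P₀‖`.
Differentiating `(1 - P) H P = 0` and multiplying by `P₀` on the right gives
`(H₀ - ω0 s₀) P' P₀ = -(1 - P₀) H' P₀`. The range of `P' P₀` is orthogonal to the
`ω0 s₀`-eigenspace of `H₀`, and on the orthogonal complement of that eigenspace `H₀ - ω0 s₀` is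
bounded below by the gap `Δ`; hence `Δ ‖P' P₀‖ ≤ ‖(1 - P₀) H' P₀‖ ≤ ‖H'‖`.
-/

open Module.End InnerProductSpace

theorem IsIdempotentElem.mul_mul_self_eq_zero {R : Type*} [Ring R] {p q : R}
    (hp : IsIdempotentElem p) (hq : q = q * p + p * q) : p * q * p = 0 := by
  have h : p * q * p = p * q * p + p * q * p := by
    conv_lhs => rw [hq]
    simp only [mul_add, add_mul, mul_assoc, hp.eq]
    rw [← mul_assoc p p, hp.eq]
  simpa using h

theorem IsStarProjection.norm_mul_mul_le {A : Type*} [NormedRing A] [StarRing A] [CStarRing A]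
    {p q : A} (hp : IsStarProjection p) (hq : IsStarProjection q) (a : A) :
    ‖q * a * p‖ ≤ ‖a‖ :=
  calc ‖q * a * p‖ ≤ ‖q‖ * ‖a‖ * ‖p‖ := norm_mul₃_le
    _ ≤ 1 * ‖a‖ * 1 := by gcongr <;> [exact hq.norm_le; exact hp.norm_le]
    _ = ‖a‖ := by ring

theorem HasDerivAt.isSelfAdjoint {F : Type*} [NormedAddCommGroup F] [NormedSpace ℝ F]
    [StarAddMonoid F] [StarModule ℝ F] [ContinuousStar F] {f : ℝ → F} {f' : F} {x : ℝ}
    (hf : HasDerivAt f f' x) (h : ∀ᶠ y in 𝓝 x, IsSelfAdjoint (f y)) : IsSelfAdjoint f' :=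
  (hf.unique (hf.star.congr_of_eventuallyEq (h.mono fun _ hy => hy.star_eq.symm))).symm

section ProjectionPath

variable {A : Type*} [NormedRing A] [NormedAlgebra ℝ A] {h p : ℝ → A} {h' p' : A} {x : ℝ}

theorem HasDerivAt.eq_mul_add_mul_of_isIdempotentElem (hp : HasDerivAt p p' x)
    (hidem : ∀ᶠ y in 𝓝 x, IsIdempotentElem (p y)) : p' = p' * p x + p x * p' :=
  hp.unique ((hp.mul hp).congr_of_eventuallyEq (hidem.mono fun _ hy => hy.eq.symm))

theorem HasDerivAt.mul_deriv_mul_sub_smul_eq {ω : ℝ → ℝ} (hh : HasDerivAt h h' x)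
    (hp : HasDerivAt p p' x) (hidem : ∀ᶠ y in 𝓝 x, IsIdempotentElem (p y))
    (heig : ∀ᶠ y in 𝓝 x, h y * p y = ω y • p y) (hx : p x * h x = ω x • p x) :
    h x * (p' * p x) - ω x • (p' * p x) = -((1 - p x) * h' * p x) := by
  have hmid := hidem.self_of_nhds.mul_mul_self_eq_zero (hp.eq_mul_add_mul_of_isIdempotentElem hidem)
  have hzero : HasDerivAt (fun y => (1 - p y) * h y * p y) 0 x := by
    refine (hasDerivAt_const x 0).congr_of_eventuallyEq ?_
    filter_upwards [hidem, heig] with y hidem_y heig_y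
    rw [mul_assoc, heig_y, mul_smul_comm, sub_mul, one_mul, hidem_y.eq, sub_self, smul_zero]
  have hderiv := congrArg (· * p x) ((((hp.const_sub 1).mul hh).mul hp).unique hzero)
  simp only [add_mul, neg_mul, zero_mul, Pi.mul_apply] at hderiv
  have hPP : p x * p x = p x := hidem.self_of_nhds.eq
  have e₁ : p' * h x * p x * p x = ω x • (p' * p x) := by
    rw [mul_assoc, hPP, mul_assoc, heig.self_of_nhds, mul_smul_comm]
  have e₂ : (1 - p x) * h' * p x * p x = (1 - p x) * h' * p x := by rw [mul_assoc, hPP]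
  have e₃ : (1 - p x) * h x * p' * p x = h x * (p' * p x) := by
    have : p x * h x * p' * p x = 0 := by
      rw [hx, smul_mul_assoc, smul_mul_assoc, hmid, smul_zero]
    rw [show (1 - p x) * h x * p' * p x = h x * p' * p x - p x * h x * p' * p x by noncomm_ring,
      this, sub_zero, mul_assoc]
  rw [e₁, e₂, e₃] at hderiv
  rw [eq_neg_iff_add_eq_zero, ← hderiv]
  abel

end ProjectionPath

theorem LinearMap.IsSymmetric.mul_norm_le_norm_sub_smul {𝕜 E : Type*} [RCLike 𝕜]
    [NormedAddCommGroup E] [InnerProductSpace 𝕜 E] [FiniteDimensional 𝕜 E] {T : E →ₗ[𝕜] E}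
    (hT : T.IsSymmetric) {c Δ : ℝ} (hΔ : 0 ≤ Δ)
    (hgap : ∀ μ : ℝ, HasEigenvalue T μ → μ ≠ c → Δ ≤ |μ - c|) {v : E}
    (hv : v ∈ (eigenspace T c)ᗮ) : Δ * ‖v‖ ≤ ‖T v - (c : 𝕜) • v‖ := by
  set b := hT.eigenvectorBasis rfl
  set μ := hT.eigenvalues rfl
  have hcoeff (i) : Δ ^ 2 * ‖⟪b i, v⟫_𝕜‖ ^ 2 ≤ ‖⟪b i, T v - (c : 𝕜) • v⟫_𝕜‖ ^ 2 := by
    have hinner : ⟪b i, T v - (c : 𝕜) • v⟫_𝕜 = ((μ i - c : ℝ) : 𝕜) * ⟪b i, v⟫_𝕜 := by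
      rw [inner_sub_right, inner_smul_right, ← hT, hT.apply_eigenvectorBasis, inner_smul_left,
        RCLike.conj_ofReal]
      push_cast
      ring
    rcases eq_or_ne (μ i) c with hμ | hμ
    · have hb : b i ∈ eigenspace T c := by
        rw [mem_eigenspace_iff, ← hμ]
        exact hT.apply_eigenvectorBasis rfl i
      simp [Submodule.inner_right_of_mem_orthogonal hb hv]
    · rw [hinner, norm_mul, mul_pow, RCLike.norm_ofReal]
      gcongr
      exact hgap _ (hT.hasEigenvalue_eigenvalues rfl i) hμ
  have hsq : (Δ * ‖v‖) ^ 2 ≤ ‖T v - (c : 𝕜) • v‖ ^ 2 := by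
    rw [mul_pow, ← b.sum_sq_norm_inner_right v, ← b.sum_sq_norm_inner_right, Finset.mul_sum]
    exact Finset.sum_le_sum fun i _ => hcoeff i
  exact (pow_le_pow_iff_left₀ (by positivity) (norm_nonneg _) two_ne_zero).mp hsq

namespace Matrix

theorem mul_eq_smul_of_mulVec_eq_smul {R n : Type*} [CommRing R] [Fintype n]
    {A P : Matrix n n R} {c : R} (hP : P * P = P) (h : ∀ v, P *ᵥ v = v → A *ᵥ v = c • v) :
    A * P = c • P :=
  ext_iff_mulVec.mpr fun v => by
    rw [← mulVec_mulVec, h _ (by rw [mulVec_mulVec, hP]), smul_mulVec]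

theorem IsHermitian.mul_l2_opNorm_le {𝕜 n : Type*} [RCLike 𝕜] [Fintype n] [DecidableEq n]
    {A M : Matrix n n 𝕜} (hA : A.IsHermitian) {c Δ : ℝ} (hΔ : 0 < Δ)
    (hgap : ∀ μ : ℝ, (μ : 𝕜) ∈ spectrum 𝕜 A → μ ≠ c → Δ ≤ |μ - c|)
    (hM : ∀ v, A *ᵥ v = (c : 𝕜) • v → Mᴴ *ᵥ v = 0) :
    Δ * ‖M‖ ≤ ‖A * M - (c : 𝕜) • M‖ := by
  rw [mul_comm, ← le_div_iff₀ hΔ, ← l2_opNorm_toEuclideanCLM]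
  refine ContinuousLinearMap.opNorm_le_bound _ (by positivity) fun x => ?_
  have hT : (toEuclideanLin A).IsSymmetric := isSymmetric_toEuclideanLin_iff.mpr hA
  have hgapT (μ : ℝ) (hμ : HasEigenvalue (toEuclideanLin A) μ) : μ ≠ c → Δ ≤ |μ - c| := by
    refine hgap μ ?_
    rw [← spectrum_toLpLin 2]
    exact hasEigenvalue_iff_mem_spectrum.mp hμ
  have horth : toEuclideanLin M x ∈ (eigenspace (toEuclideanLin A) c)ᗮ := by
    refine Submodule.mem_orthogonal _ _ |>.mpr fun u hu => ?_
    have hAu : A *ᵥ u.ofLp = (c : 𝕜) • u.ofLp := congrArg WithLp.ofLp (mem_eigenspace_iff.mp hu)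
    have hMu : toEuclideanLin Mᴴ u = 0 := by
      rw [toLpLin_apply, hM _ hAu, WithLp.toLp_zero]
    rw [← LinearMap.adjoint_inner_left, ← toEuclideanLin_conjTranspose_eq_adjoint, hMu,
      inner_zero_left]
  have himage : toEuclideanLin A (toEuclideanLin M x) - (c : 𝕜) • toEuclideanLin M x =
      toEuclideanCLM (n := n) (𝕜 := 𝕜) (A * M - (c : 𝕜) • M) x := by
    ext i
    simp [mulVec_mulVec, smul_mulVec]
  rw [div_mul_eq_mul_div, le_div_iff₀ hΔ, mul_comm]
  exact (hT.mul_norm_le_norm_sub_smul hΔ.le hgapT horth).trans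
    (himage ▸ (toEuclideanCLM (n := n) (𝕜 := 𝕜) (A * M - (c : 𝕜) • M)).le_opNorm x)

end Matrix

theorem le_abs_sub_of_inter_image_Icc_subset {s : Set ℂ} {c Δ : ℝ}
    (h : s ∩ (fun x : ℝ => (x : ℂ)) '' Set.Icc (c - Δ) (c + Δ) ⊆ {(c : ℂ)}) (μ : ℝ)
    (hμ : (μ : ℂ) ∈ s) (hne : μ ≠ c) : Δ ≤ |μ - c| := by
  by_contra! hlt
  obtain ⟨h₁, h₂⟩ := abs_sub_lt_iff.mp hlt
  have := h ⟨hμ, μ, ⟨by linarith, by linarith⟩, rfl⟩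
  exact hne (by exact_mod_cast Set.mem_singleton_iff.mp this)
theorem stmt1_general (n : ℕ)
    (H P : ℝ → Matrix (Fin n) (Fin n) ℂ) (s₀ : ℝ)
    (H' P' : Matrix (Fin n) (Fin n) ℂ)
    (ω0 : ℝ → ℝ) (Δ : ℝ)
    -- `H` is a path of Hermitian matrices, differentiable at `s₀`
    (hHherm : ∀ᶠ s in 𝓝 s₀, (H s).IsHermitian)
    (hHderiv : HasDerivAt H H' s₀)
    -- the gap condition at `s₀`
    (hΔpos : 0 < Δ)
    (hgap : spectrum ℂ (H s₀) ∩
        ((fun x : ℝ => (x : ℂ)) '' Set.Icc (ω0 s₀ - Δ) (ω0 s₀ + Δ)) = {(ω0 s₀ : ℂ)})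
    -- `P` is differentiable at `s₀`, and near `s₀` each `P s` is the orthogonal
    -- projection onto the eigenspace of `H s` for the eigenvalue `ω0 s`
    (hPderiv : HasDerivAt P P' s₀)
    (hPproj : ∀ᶠ s in 𝓝 s₀, (P s).IsHermitian ∧ P s * P s = P s ∧
        ∀ v : Fin n → ℂ, (H s).mulVec v = (ω0 s : ℂ) • v ↔ (P s).mulVec v = v) :
    ‖P'‖ ≤ 2 * ‖H'‖ / Δ := by
  have hproj : ∀ᶠ s in 𝓝 s₀, IsStarProjection (P s) := hPproj.mono fun _ hs => ⟨hs.2.1, hs.1⟩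
  have hidem := hproj.mono fun _ hs => hs.isIdempotentElem
  have heig : ∀ᶠ s in 𝓝 s₀, H s * P s = ω0 s • P s := hPproj.mono fun _ hs => by
    rw [← Complex.coe_smul]
    exact Matrix.mul_eq_smul_of_mulVec_eq_smul hs.2.1 fun v => (hs.2.2 v).mpr
  have hP₀ : IsStarProjection (P s₀) := hproj.self_of_nhds
  have hH₀ : IsSelfAdjoint (H s₀) := hHherm.self_of_nhds
  have hPH : P s₀ * H s₀ = ω0 s₀ • P s₀ := by
    simpa [hH₀.star_eq, hP₀.isSelfAdjoint.star_eq] using congrArg star heig.self_of_nhds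
  have hP'sa : IsSelfAdjoint P' := hPderiv.isSelfAdjoint (hproj.mono fun _ hs => hs.isSelfAdjoint)
  have hsplit := hPderiv.eq_mul_add_mul_of_isIdempotentElem hidem
  have hmid := hP₀.isIdempotentElem.mul_mul_self_eq_zero hsplit
  have hstar : star (P' * P s₀) = P s₀ * P' := by
    rw [star_mul, hP₀.isSelfAdjoint.star_eq, hP'sa.star_eq]
  have hbound : Δ * ‖P' * P s₀‖ ≤ ‖H'‖ := by
    refine (hHherm.self_of_nhds.mul_l2_opNorm_le hΔpos
      (le_abs_sub_of_inter_image_Icc_subset hgap.subset) fun v hv => ?_).trans ?_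
    · rw [← Matrix.star_eq_conjTranspose, hstar, ← (hPproj.self_of_nhds.2.2 v).mp hv,
        Matrix.mulVec_mulVec, hmid, Matrix.zero_mulVec]
    · rw [← RCLike.real_smul_eq_coe_smul,
        hHderiv.mul_deriv_mul_sub_smul_eq hPderiv hidem heig hPH, norm_neg]
      exact hP₀.norm_mul_mul_le hP₀.one_sub H'
  calc ‖P'‖ = ‖P' * P s₀ + P s₀ * P'‖ := by rw [← hsplit]
    _ ≤ ‖P' * P s₀‖ + ‖P s₀ * P'‖ := norm_add_le _ _
    _ = 2 * ‖P' * P s₀‖ := by rw [← hstar, norm_star]; ring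
    _ ≤ 2 * ‖H'‖ / Δ := by rw [mul_div_assoc]; gcongr; rwa [le_div_iff₀' hΔpos]

/-- First derivative bound for the spectral projector: `‖P'(s₀)‖ ≤ 2‖H'(s₀)‖/Δ`. -/
theorem stmt1 (n : ℕ) (hn : 1 ≤ n)
    (H P : ℝ → Matrix (Fin n) (Fin n) ℂ) (s₀ : ℝ)
    (H' P' : Matrix (Fin n) (Fin n) ℂ)
    (ω0 : ℝ → ℝ) (Δ : ℝ)
    -- `H` is a path of Hermitian matrices, differentiable at `s₀`
    (hHherm : ∀ᶠ s in 𝓝 s₀, (H s).IsHermitian)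
    (hHderiv : HasDerivAt H H' s₀)
    -- `ω0` is continuous, and `ω0 s` is an eigenvalue of `H s` for `s` near `s₀`
    (hω0cont : ContinuousAt ω0 s₀)
    (hω0eig : ∀ᶠ s in 𝓝 s₀, (ω0 s : ℂ) ∈ spectrum ℂ (H s))
    -- the gap condition at `s₀`
    (hΔpos : 0 < Δ)
    (hgap : spectrum ℂ (H s₀) ∩
        ((fun x : ℝ => (x : ℂ)) '' Set.Icc (ω0 s₀ - Δ) (ω0 s₀ + Δ)) = {(ω0 s₀ : ℂ)})
    -- `P` is differentiable at `s₀`, and near `s₀` each `P s` is the orthogonal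
    -- projection onto the eigenspace of `H s` for the eigenvalue `ω0 s`
    (hPderiv : HasDerivAt P P' s₀)
    (hPproj : ∀ᶠ s in 𝓝 s₀, (P s).IsHermitian ∧ P s * P s = P s ∧
        ∀ v : Fin n → ℂ, (H s).mulVec v = (ω0 s : ℂ) • v ↔ (P s).mulVec v = v) :
    ‖P'‖ ≤ 2 * ‖H'‖ / Δ :=
  stmt1_general n H P s₀ H' P' ω0 Δ hHherm hHderiv hΔpos hgap hPderiv hPproj
end

section
/- In the Poisson-dephasing evolution model, the infidelity of the final state is bounded as: 1 − Re Tr(P(1)·ρ(1)) ≤ ‖P'(0)‖/λ(0) + ‖P'(1)‖/λ(1) + ∫₀¹ ( ‖P''(s)‖/λ(s) + |(1/λ)'(s)|·‖P'(s)‖ ) ds. -/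
/-!
Write `f = Re Tr(Pρ)` and `g = Re Tr(P'ρ)`. Differentiating `P² = P` gives `PP'P = 0` and
`QP'Q = 0`, so the dephasing part of the generator is invisible to both traces:
`f' = g` and `g' = Re Tr(P''ρ) - λ g`. Hence `f + g/λ` has derivative
`Re Tr(P''ρ)/λ - g λ'/λ²`, and integrating over `[0,1]` together with
`|Re Tr(Aρ)| ≤ ‖A‖` for density matrices gives the bound.
-/

open scoped Matrix.Norms.L2Operator Topology ComplexOrder

section Idempotent

variable {R : Type*} [Ring R] {p d : R}

lemma IsIdempotentElem.mul_mul_eq_zero_of_eq_mul_add_mul (hp : IsIdempotentElem p)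
    (hd : d = d * p + p * d) : p * d * p = 0 := by
  have h : p * d = p * d * p + p * d := by
    conv_lhs => rw [hd]
    rw [mul_add, ← mul_assoc, ← mul_assoc, hp.eq]
  exact right_eq_add.mp h

lemma IsIdempotentElem.one_sub_mul_mul_one_sub_eq_zero_of_eq_mul_add_mul
    (hp : IsIdempotentElem p) (hd : d = d * p + p * d) : (1 - p) * d * (1 - p) = 0 := by
  have h : (1 - p) * d * (1 - p) = d - (d * p + p * d) + p * d * p := by noncomm_ring
  rw [h, ← hd, hp.mul_mul_eq_zero_of_eq_mul_add_mul hd, sub_self, add_zero]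

end Idempotent

lemma HasDerivWithinAt.eq_mul_add_mul_of_isIdempotentElem {𝔸 : Type*} [NormedRing 𝔸]
    [NormedAlgebra ℝ 𝔸] {P : ℝ → 𝔸} {P' : 𝔸} {s : Set ℝ} {x : ℝ}
    (hP : HasDerivWithinAt P P' s x) (hs : UniqueDiffWithinAt ℝ s x) (hx : x ∈ s)
    (hidem : ∀ t ∈ s, IsIdempotentElem (P t)) : P' = P' * P x + P x * P' := by
  have hsq : HasDerivWithinAt P (P' * P x + P x * P') s x :=
    (hP.mul hP).congr (fun t ht => (hidem t ht).eq.symm) (hidem x hx).eq.symm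
  exact hs.eq_deriv _ hP hsq

namespace Matrix

section Dephasing

variable {m R : Type*} [Fintype m] [DecidableEq m] [CommRing R] {p d : Matrix m m R}

lemma trace_mul_dephasing_sub (hp : IsIdempotentElem p) (ρ σ : Matrix m m R) :
    (p * (p * ρ * p + (1 - p) * σ * (1 - p) - ρ)).trace = 0 := by
  have hpQ : p * (1 - p) = 0 := by rw [mul_sub, mul_one, hp.eq, sub_self]
  have hPρP : p * (p * ρ * p) = (p * ρ) * p := by rw [← mul_assoc, ← mul_assoc, hp.eq]
  have hQσQ : p * ((1 - p) * σ * (1 - p)) = 0 := by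
    rw [← mul_assoc, ← mul_assoc, hpQ, zero_mul, zero_mul]
  rw [mul_sub, mul_add, hPρP, hQσQ, add_zero, trace_sub, trace_mul_comm (p * ρ), ← mul_assoc,
    hp.eq, sub_self]

lemma trace_mul_dephasing_sub_of_eq_mul_add_mul (hp : IsIdempotentElem p)
    (hd : d = d * p + p * d) (ρ σ : Matrix m m R) :
    (d * (p * ρ * p + (1 - p) * σ * (1 - p) - ρ)).trace = -(d * ρ).trace := by
  have hP : (d * (p * ρ * p)).trace = 0 := by
    rw [← mul_assoc, trace_mul_comm, ← mul_assoc, ← mul_assoc,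
      hp.mul_mul_eq_zero_of_eq_mul_add_mul hd, zero_mul, trace_zero]
  have hQ : (d * ((1 - p) * σ * (1 - p))).trace = 0 := by
    rw [← mul_assoc, trace_mul_comm, ← mul_assoc, ← mul_assoc,
      hp.one_sub_mul_mul_one_sub_eq_zero_of_eq_mul_add_mul hd, zero_mul, trace_zero]
  rw [mul_sub, mul_add, trace_sub, trace_add, hP, hQ, zero_add, zero_sub]

end Dephasing

variable {𝕜 m n : Type*} [RCLike 𝕜] [Fintype m] [Fintype n] [DecidableEq n]

lemma norm_apply_le_l2_opNorm (A : Matrix m n 𝕜) (i : m) (j : n) : ‖A i j‖ ≤ ‖A‖ := by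
  let e : EuclideanSpace 𝕜 n := EuclideanSpace.single j 1
  calc ‖A i j‖ = ‖(EuclideanSpace.equiv m 𝕜).symm (A *ᵥ e) i‖ := by simp [e]
    _ ≤ ‖(EuclideanSpace.equiv m 𝕜).symm (A *ᵥ e)‖ := PiLp.norm_apply_le _ _
    _ ≤ ‖A‖ * ‖e‖ := A.l2_opNorm_mulVec e
    _ = ‖A‖ := by simp [e]

lemma PosSemidef.norm_trace_mul_le {A R : Matrix n n 𝕜} (hR : R.PosSemidef) :
    ‖(A * R).trace‖ ≤ ‖A‖ * RCLike.re R.trace := by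
  set U := hR.1.eigenvectorUnitary
  set d := hR.1.eigenvalues
  have htrace : (A * R).trace = ∑ i, (star (U : Matrix n n 𝕜) * A * U) i i * d i := by
    conv_lhs => rw [hR.1.spectral_theorem, Unitary.conjStarAlgAut_apply]
    rw [← mul_assoc, ← mul_assoc, trace_mul_cycle, ← mul_assoc]
    simp [trace, mul_diagonal, U, d]
  have hdiag : ∀ i, ‖(star (U : Matrix n n 𝕜) * A * U) i i‖ ≤ ‖A‖ := fun i =>
    (norm_apply_le_l2_opNorm _ i i).trans_eq (by
      rw [CStarRing.norm_mul_coe_unitary, ← Unitary.coe_star, CStarRing.norm_coe_unitary_mul])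
  calc ‖(A * R).trace‖ ≤ ∑ i, ‖A‖ * d i := by
        rw [htrace]
        refine (norm_sum_le _ _).trans (Finset.sum_le_sum fun i _ => ?_)
        rw [norm_mul, RCLike.norm_ofReal, abs_of_nonneg (hR.eigenvalues_nonneg i)]
        exact mul_le_mul_of_nonneg_right (hdiag i) (hR.eigenvalues_nonneg i)
    _ = ‖A‖ * RCLike.re R.trace := by
        rw [← Finset.mul_sum, hR.1.trace_eq_sum_eigenvalues]
        simp [d]

lemma abs_re_trace_mul_le_of_density {A ρ : Matrix n n ℂ} (hρ : ρ.PosSemidef)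
    (htr : ρ.trace = 1) : |(A * ρ).trace.re| ≤ ‖A‖ := by
  simpa [htr] using (Complex.abs_re_le_norm _).trans hρ.norm_trace_mul_le

end Matrix

lemma HasDerivWithinAt.re_trace {m : Type*} [Fintype m] [DecidableEq m]
    {f : ℝ → Matrix m m ℂ} {f' : Matrix m m ℂ} {s : Set ℝ} {x : ℝ}
    (h : HasDerivWithinAt f f' s x) : HasDerivWithinAt (fun t => (f t).trace.re) f'.trace.re s x :=
  (Complex.reCLM.comp (LinearMap.toContinuousLinearMap
    ((Matrix.traceLinearMap m ℂ ℂ).restrictScalars ℝ))).hasFDerivAt.comp_hasDerivWithinAt x h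

section Relaxation

open Set MeasureTheory

lemma neg_sub_div_le_of_abs_le {g h A B lam lam' : ℝ} (hlam : 0 < lam) (hg : |g| ≤ A)
    (hh : |h| ≤ B) : -(h / lam - g * lam' / lam ^ 2) ≤ B / lam + |lam'| / lam ^ 2 * A := by
  have h₁ : -(h / lam) ≤ B / lam := by
    rw [← neg_div]
    exact div_le_div_of_nonneg_right ((neg_le_abs h).trans hh) hlam.le
  have h₂ : g * lam' / lam ^ 2 ≤ |lam'| / lam ^ 2 * A := by
    rw [div_mul_eq_mul_div]
    refine div_le_div_of_nonneg_right ?_ (sq_nonneg lam)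
    calc g * lam' ≤ |g| * |lam'| := (le_abs_self _).trans_eq (abs_mul _ _)
      _ ≤ |lam'| * A := by rw [mul_comm]; gcongr
  linarith

theorem sub_le_of_hasDerivWithinAt_relaxation {a b : ℝ} {f g h lam lam' A B : ℝ → ℝ}
    (hab : a ≤ b) (hlam : ∀ s ∈ Icc a b, 0 < lam s)
    (hlam' : ∀ s ∈ Icc a b, HasDerivWithinAt lam (lam' s) (Icc a b) s)
    (hlam'c : ContinuousOn lam' (Icc a b)) (hAc : ContinuousOn A (Icc a b))
    (hBc : ContinuousOn B (Icc a b))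
    (hf : ∀ s ∈ Icc a b, HasDerivWithinAt f (g s) (Icc a b) s)
    (hg : ∀ s ∈ Icc a b, HasDerivWithinAt g (h s - lam s * g s) (Icc a b) s)
    (hgA : ∀ s ∈ Icc a b, |g s| ≤ A s) (hhB : ∀ s ∈ Icc a b, |h s| ≤ B s) :
    f a - f b ≤ A a / lam a + A b / lam b +
      ∫ s in a..b, (B s / lam s + |lam' s| / lam s ^ 2 * A s) := by
  have hlam0 : ∀ s ∈ Icc a b, lam s ≠ 0 := fun s hs => (hlam s hs).ne'
  have hF : ∀ s ∈ Icc a b, HasDerivWithinAt (fun t => -(f t + g t / lam t))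
      (-(h s / lam s - g s * lam' s / lam s ^ 2)) (Icc a b) s := by
    intro s hs
    refine ((hf s hs).add ((hg s hs).div (hlam' s hs) (hlam0 s hs))).neg.congr_deriv ?_
    field_simp [hlam0 s hs]
    ring
  have hlamc : ContinuousOn lam (Icc a b) := fun s hs => (hlam' s hs).continuousWithinAt
  have hint : IntegrableOn (fun s => B s / lam s + |lam' s| / lam s ^ 2 * A s) (Icc a b) :=
    ((hBc.div hlamc hlam0).add ((hlam'c.abs.div (hlamc.pow 2)
      fun s hs => pow_ne_zero 2 (hlam0 s hs)).mul hAc)).integrableOn_Icc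
  have key := intervalIntegral.sub_le_integral_of_hasDeriv_right_of_le hab
    (fun s hs => (hF s hs).continuousWithinAt)
    (fun s hs => ((hF s (Ioo_subset_Icc_self hs)).hasDerivAt
      (Icc_mem_nhds hs.1 hs.2)).hasDerivWithinAt) hint
    (fun s hs => neg_sub_div_le_of_abs_le (hlam s (Ioo_subset_Icc_self hs))
      (hgA s (Ioo_subset_Icc_self hs)) (hhB s (Ioo_subset_Icc_self hs)))
  have ha : a ∈ Icc a b := left_mem_Icc.mpr hab
  have hb : b ∈ Icc a b := right_mem_Icc.mpr hab
  have hga : -(g a / lam a) ≤ A a / lam a := by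
    rw [← neg_div]
    exact div_le_div_of_nonneg_right ((neg_le_abs _).trans (hgA a ha)) (hlam a ha).le
  have hgb : g b / lam b ≤ A b / lam b :=
    div_le_div_of_nonneg_right (le_of_abs_le (hgA b hb)) (hlam b hb).le
  linarith

end Relaxation

theorem stmt3_general (n : ℕ)
    (lam lam' : ℝ → ℝ)
    (P P' P'' ρ σ : ℝ → Matrix (Fin n) (Fin n) ℂ)
    -- `λ` is continuously differentiable and positive on `[0,1]`
    (hlampos : ∀ s ∈ Set.Icc (0:ℝ) 1, 0 < lam s)
    (hlamderiv : ∀ s ∈ Set.Icc (0:ℝ) 1, HasDerivWithinAt lam (lam' s) (Set.Icc 0 1) s)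
    (hlam'cont : ContinuousOn lam' (Set.Icc 0 1))
    -- `P` is twice continuously differentiable on `[0,1]`
    (hPderiv : ∀ s ∈ Set.Icc (0:ℝ) 1, HasDerivWithinAt P (P' s) (Set.Icc 0 1) s)
    (hPderiv2 : ∀ s ∈ Set.Icc (0:ℝ) 1, HasDerivWithinAt P' (P'' s) (Set.Icc 0 1) s)
    (hP''cont : ContinuousOn P'' (Set.Icc 0 1))
    -- each `P s` is an orthogonal projection
    (hPproj : ∀ s ∈ Set.Icc (0:ℝ) 1, (P s).IsHermitian ∧ P s * P s = P s)
    -- `ρ` is a differentiable path of density matrices solving the dephasing ODE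
    (hρdens : ∀ s ∈ Set.Icc (0:ℝ) 1, (ρ s).PosSemidef ∧ (ρ s).trace = 1)
    (hρode : ∀ s ∈ Set.Icc (0:ℝ) 1, HasDerivWithinAt ρ
        (lam s • (P s * ρ s * P s + (1 - P s) * σ s * (1 - P s) - ρ s)) (Set.Icc 0 1) s)
    -- initial condition
    (hinit : ((P 0 * ρ 0).trace).re = 1) :
    1 - ((P 1 * ρ 1).trace).re ≤
      ‖P' 0‖ / lam 0 + ‖P' 1‖ / lam 1 +
        ∫ s in (0:ℝ)..1, (‖P'' s‖ / lam s + |lam' s| / (lam s) ^ 2 * ‖P' s‖) := by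
  have hidem : ∀ s ∈ Set.Icc (0:ℝ) 1, IsIdempotentElem (P s) := fun s hs => (hPproj s hs).2
  have htangent : ∀ s ∈ Set.Icc (0:ℝ) 1, P' s = P' s * P s + P s * P' s := fun s hs =>
    (hPderiv s hs).eq_mul_add_mul_of_isIdempotentElem (uniqueDiffOn_Icc one_pos s hs) hs hidem
  have hbound : ∀ (A : ℝ → Matrix (Fin n) (Fin n) ℂ), ∀ s ∈ Set.Icc (0:ℝ) 1,
      |(A s * ρ s).trace.re| ≤ ‖A s‖ := fun A s hs =>
    Matrix.abs_re_trace_mul_le_of_density (hρdens s hs).1 (hρdens s hs).2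
  have hf : ∀ s ∈ Set.Icc (0:ℝ) 1, HasDerivWithinAt (fun t => (P t * ρ t).trace.re)
      (P' s * ρ s).trace.re (Set.Icc 0 1) s := fun s hs => by
    refine ((hPderiv s hs).mul (hρode s hs)).re_trace.congr_deriv ?_
    rw [mul_smul_comm, Matrix.trace_add, Matrix.trace_smul,
      Matrix.trace_mul_dephasing_sub (hidem s hs), smul_zero, add_zero]
  have hg : ∀ s ∈ Set.Icc (0:ℝ) 1, HasDerivWithinAt (fun t => (P' t * ρ t).trace.re)
      ((P'' s * ρ s).trace.re - lam s * (P' s * ρ s).trace.re) (Set.Icc 0 1) s := fun s hs => by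
    refine ((hPderiv2 s hs).mul (hρode s hs)).re_trace.congr_deriv ?_
    rw [mul_smul_comm, Matrix.trace_add, Matrix.trace_smul,
      Matrix.trace_mul_dephasing_sub_of_eq_mul_add_mul (hidem s hs) (htangent s hs)]
    simp [sub_eq_add_neg]
  simpa only [hinit] using sub_le_of_hasDerivWithinAt_relaxation zero_le_one hlampos hlamderiv
    hlam'cont (fun s hs => (hPderiv2 s hs).continuousWithinAt.norm) hP''cont.norm hf hg
    (hbound P') (hbound P'')

/-- Infidelity bound for the Poisson-dephasing evolution (Lemma `errorBound`):
`1 − Re Tr(P(1)ρ(1)) ≤ ‖P'(0)‖/λ(0) + ‖P'(1)‖/λ(1)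
  + ∫₀¹ (‖P''(s)‖/λ(s) + |(1/λ)'(s)|·‖P'(s)‖) ds`. -/
theorem stmt3 (n : ℕ) (hn : 1 ≤ n)
    (lam lam' : ℝ → ℝ)
    (P P' P'' ρ σ : ℝ → Matrix (Fin n) (Fin n) ℂ)
    -- `λ` is continuously differentiable and positive on `[0,1]`
    (hlampos : ∀ s ∈ Set.Icc (0:ℝ) 1, 0 < lam s)
    (hlamderiv : ∀ s ∈ Set.Icc (0:ℝ) 1, HasDerivWithinAt lam (lam' s) (Set.Icc 0 1) s)
    (hlam'cont : ContinuousOn lam' (Set.Icc 0 1))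
    -- `P` is twice continuously differentiable on `[0,1]`
    (hPderiv : ∀ s ∈ Set.Icc (0:ℝ) 1, HasDerivWithinAt P (P' s) (Set.Icc 0 1) s)
    (hPderiv2 : ∀ s ∈ Set.Icc (0:ℝ) 1, HasDerivWithinAt P' (P'' s) (Set.Icc 0 1) s)
    (hP''cont : ContinuousOn P'' (Set.Icc 0 1))
    -- each `P s` is an orthogonal projection
    (hPproj : ∀ s ∈ Set.Icc (0:ℝ) 1, (P s).IsHermitian ∧ P s * P s = P s)
    -- `σ` is continuous
    (hσcont : ContinuousOn σ (Set.Icc 0 1))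
    -- `ρ` is a differentiable path of density matrices solving the dephasing ODE
    (hρdens : ∀ s ∈ Set.Icc (0:ℝ) 1, (ρ s).PosSemidef ∧ (ρ s).trace = 1)
    (hρode : ∀ s ∈ Set.Icc (0:ℝ) 1, HasDerivWithinAt ρ
        (lam s • (P s * ρ s * P s + (1 - P s) * σ s * (1 - P s) - ρ s)) (Set.Icc 0 1) s)
    -- initial condition
    (hinit : ((P 0 * ρ 0).trace).re = 1) :
    1 - ((P 1 * ρ 1).trace).re ≤
      ‖P' 0‖ / lam 0 + ‖P' 1‖ / lam 1 +
        ∫ s in (0:ℝ)..1, (‖P'' s‖ / lam s + |lam' s| / (lam s) ^ 2 * ‖P' s‖) :=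
  stmt3_general n lam lam' P P' P'' ρ σ hlampos hlamderiv hlam'cont hPderiv hPderiv2 hP''cont hPproj
    hρdens hρode hinit
end

section
/- Let H ∈ Matrix n n ℂ, t ∈ ℝ, N ∈ ℕ, and let a : {−N,…,N} → ℂ be a family of coefficients. Let D be the (2N+1)×(2N+1) diagonal matrix with diagonal entries k for k ∈ {−N,…,N}, and let X := exp(−i·t·(H ⊗ D)) be the matrix exponential of the Kronecker product, regarded as a block matrix whose (k,l) block X^{(k,l)} ∈ Matrix n n ℂ has entries X^{(k,l)}_{i j} = X_{(i,k),(j,l)}. Then ∑_{k,l=−N}^{N} a_k · conj(a_l) · X^{(k,l)} = ∑_{m=−N}^{N} |a_m|² · exp(−i·t·m·H). -/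
/-!
Since `D` is diagonal, `H ⊗ D` is block diagonal with blocks `(k - N) H`, and the exponential of a
block-diagonal matrix is taken blockwise. Hence `X^{(k,l)} = 0` for `k ≠ l` and
`X^{(k,k)} = exp(-i t (k - N) H)`, so only the diagonal terms of the double sum survive, with
coefficients `a_k conj(a_k) = |a_k|²`.
-/

open Matrix NormedSpace
open scoped Kronecker

namespace Matrix

variable {ι m n α : Type*} [DecidableEq ι]

section

-- `Pi.coe_exp` needs a complete normed algebra structure on the blocks; `exp` does not depend on it.
attribute [local instance] Matrix.linftyOpNormedRing Matrix.linftyOpNormedAlgebra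

theorem exp_blockDiagonal_eq_blockDiagonal_exp [Fintype ι] [Fintype m] [DecidableEq m]
    (v : ι → Matrix m m ℂ) :
    exp (blockDiagonal v) = blockDiagonal fun k => exp (v k) := by
  let _ : NormedAddCommGroup (Matrix m m ℂ) := Matrix.linftyOpNormedAddCommGroup
  let _ : NormedSpace ℂ (Matrix m m ℂ) := Matrix.linftyOpNormedSpace
  have : CompleteSpace (Matrix m m ℂ) := FiniteDimensional.complete ℂ _
  rw [exp_blockDiagonal]
  congr 1
  funext k
  exact Pi.coe_exp v k

end

theorem of_blockDiagonal_apply_prodMk [Zero α] (M : ι → Matrix m n α) (k l : ι) :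
    (of fun i j => blockDiagonal M (i, k) (j, l)) = if k = l then M k else 0 := by
  split_ifs with h
  · subst h
    ext i j
    simp [blockDiagonal_apply_eq]
  · ext i j
    simp [blockDiagonal_apply_ne _ _ _ h]

theorem sum_sum_smul_of_blockDiagonal [Fintype ι] {R : Type*} [Monoid R] [AddCommMonoid α]
    [DistribMulAction R α] (c : ι → ι → R) (M : ι → Matrix m n α) :
    ∑ k, ∑ l, c k l • (of fun i j => blockDiagonal M (i, k) (j, l)) = ∑ k, c k k • M k := by
  simp [of_blockDiagonal_apply_prodMk, smul_ite]

end Matrix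

theorem stmt10_general (n N : ℕ)
    (H : Matrix (Fin n) (Fin n) ℂ) (t : ℝ)
    (a : Fin (2 * N + 1) → ℂ)
    (D : Matrix (Fin (2 * N + 1)) (Fin (2 * N + 1)) ℂ)
    (hD : D = Matrix.diagonal fun k : Fin (2 * N + 1) => (((k : ℤ) - (N : ℤ) : ℤ) : ℂ))
    (X : Matrix (Fin n × Fin (2 * N + 1)) (Fin n × Fin (2 * N + 1)) ℂ)
    (hX : X = exp ((-(Complex.I * (t : ℂ))) • (H ⊗ₖ D))) :
    (∑ k : Fin (2 * N + 1), ∑ l : Fin (2 * N + 1),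
        (a k * (starRingEnd ℂ) (a l)) • Matrix.of fun i j : Fin n => X (i, k) (j, l)) =
      ∑ m : Fin (2 * N + 1), ((‖a m‖ ^ 2 : ℝ) : ℂ) •
        exp ((-(Complex.I * (t : ℂ) * (((m : ℤ) - (N : ℤ) : ℤ) : ℂ))) • H) := by
  subst hD hX
  rw [kronecker_diagonal, ← blockDiagonal_smul, exp_blockDiagonal_eq_blockDiagonal_exp,
    sum_sum_smul_of_blockDiagonal]
  refine Finset.sum_congr rfl fun k _ => ?_
  rw [Complex.mul_conj', Complex.ofReal_pow, Pi.smul_apply, op_smul_eq_smul, smul_smul, neg_mul]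

/-- LCU identity: for `X = exp(−i t (H ⊗ D))` with `D = diag(−N,…,N)`, one has
`∑_{k,l} a_k conj(a_l) X^{(k,l)} = ∑_m |a_m|² exp(−i t m H)`, where `X^{(k,l)}` is the
`(k,l)` block of `X`. Indices `k ∈ {−N,…,N}` are encoded as `k : Fin (2N+1)` with
integer value `(k : ℤ) − N`. -/
theorem stmt10 (n N : ℕ) (hn : 1 ≤ n)
    (H : Matrix (Fin n) (Fin n) ℂ) (t : ℝ)
    (a : Fin (2 * N + 1) → ℂ)
    (D : Matrix (Fin (2 * N + 1)) (Fin (2 * N + 1)) ℂ)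
    (hD : D = Matrix.diagonal fun k : Fin (2 * N + 1) => (((k : ℤ) - (N : ℤ) : ℤ) : ℂ))
    (X : Matrix (Fin n × Fin (2 * N + 1)) (Fin n × Fin (2 * N + 1)) ℂ)
    (hX : X = exp ((-(Complex.I * (t : ℂ))) • (H ⊗ₖ D))) :
    (∑ k : Fin (2 * N + 1), ∑ l : Fin (2 * N + 1),
        (a k * (starRingEnd ℂ) (a l)) • Matrix.of fun i j : Fin n => X (i, k) (j, l)) =
      ∑ m : Fin (2 * N + 1), ((‖a m‖ ^ 2 : ℝ) : ℂ) •
        exp ((-(Complex.I * (t : ℂ) * (((m : ℤ) - (N : ℤ) : ℤ) : ℂ))) • H) :=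
  stmt10_general n N H t a D hD X hX
end

section
/- Let H ∈ Matrix n n ℂ be Hermitian, let Δ > 0, and suppose every eigenvalue ω of H satisfies ω = 0 or |ω| ≥ Δ. Let Q be the orthogonal projection onto the orthogonal complement of the kernel of H, let ρ be positive semidefinite, let N ∈ ℕ and let c : {−N,…,N} → ℝ be nonnegative coefficients. Define F := ∑_{k=−N}^{N} c_k · exp(−i·k·H) and A(ω) := ∑_{k=−N}^{N} c_k · exp(−i·k·ω) for ω ∈ ℝ. Then Re Tr( F·(Q·ρ·Q)·F* ) ≤ ( sup_{ω ∈ ℝ, |ω| ≥ Δ} |A(ω)|² ) · Re Tr(Q·ρ·Q). -/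
/-!
In an orthonormal eigenbasis `u` of `H` (eigenvalues `λᵢ`), `F` is diagonal with entries `A(λᵢ)`
and `Q` is diagonal with entries `qᵢ = 1_{λᵢ ≠ 0}`: a Hermitian idempotent is determined by its
kernel. Both traces then become weighted sums of the nonnegative diagonal entries of `u* ρ u`,
with weights `|A(λᵢ)|² qᵢ` and `qᵢ`, and `|A(λᵢ)|²` is at most the supremum whenever `λᵢ ≠ 0`,
because then `|λᵢ| ≥ Δ`.
-/

open Matrix NormedSpace
open scoped Matrix.Norms.L2Operator ComplexOrder

namespace Matrix

variable {ι R : Type*} [Fintype ι] [DecidableEq ι]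

theorem mul_eq_self_of_ker_le [CommRing R] {P P' : Matrix ι ι R} (hP' : P' * P' = P')
    (hker : ∀ v, P' *ᵥ v = 0 → P *ᵥ v = 0) : P * P' = P := by
  have h : P * (1 - P') = 0 := ext_iff_mulVec.2 fun v => by
    rw [← mulVec_mulVec, zero_mulVec]
    exact hker _ (by rw [mulVec_mulVec, mul_sub, mul_one, hP', sub_self, zero_mulVec])
  rwa [mul_sub, mul_one, sub_eq_zero, eq_comm] at h

theorem IsHermitian.eq_of_idempotent_of_ker_eq [CommRing R] [StarRing R] {P P' : Matrix ι ι R}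
    (hP : P.IsHermitian) (hP' : P'.IsHermitian) (hPP : P * P = P) (hP'P' : P' * P' = P')
    (hker : ∀ v, P *ᵥ v = 0 ↔ P' *ᵥ v = 0) : P = P' :=
  calc P = P * P' := (mul_eq_self_of_ker_le hP'P' fun v => (hker v).2).symm
    _ = (P' * P)ᴴ := by rw [conjTranspose_mul, hP.eq, hP'.eq]
    _ = P' := by rw [mul_eq_self_of_ker_le hPP fun v => (hker v).1, hP'.eq]

theorem diagonal_mulVec_eq_zero_iff_of_eq_zero_iff [Semiring R] [NoZeroDivisors R]
    {a b : ι → R} (hab : ∀ i, a i = 0 ↔ b i = 0) (w : ι → R) :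
    diagonal a *ᵥ w = 0 ↔ diagonal b *ᵥ w = 0 := by
  simp only [funext_iff, mulVec_diagonal, Pi.zero_apply, mul_eq_zero, hab]

end Matrix

namespace Unitary

variable {ι R : Type*} [Fintype ι] [DecidableEq ι]

theorem trace_conjStarAlgAut [CommRing R] [StarRing R] (u : unitary (Matrix ι ι R))
    (X : Matrix ι ι R) : (conjStarAlgAut R _ u X).trace = X.trace := by
  rw [conjStarAlgAut_apply, trace_mul_cycle, Unitary.coe_star_mul_self, one_mul]

theorem conjStarAlgAut_mulVec_eq_zero_iff [CommRing R] [StarRing R] (u : unitary (Matrix ι ι R))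
    (X : Matrix ι ι R) (v : ι → R) :
    conjStarAlgAut R _ u X *ᵥ v = 0 ↔ X *ᵥ ((star u : Matrix ι ι R) *ᵥ v) = 0 := by
  rw [conjStarAlgAut_apply, ← mulVec_mulVec, ← mulVec_mulVec]
  exact (mulVec_injective_of_isUnit Unitary.isUnit_coe).eq_iff' (mulVec_zero _)

theorem trace_conjStarAlgAut_diagonal_mul_mul_conjTranspose {𝕜 : Type*} [RCLike 𝕜]
    (u : unitary (Matrix ι ι 𝕜)) (b : ι → 𝕜) (ρ : Matrix ι ι 𝕜) :
    (conjStarAlgAut 𝕜 _ u (diagonal b) * ρ * (conjStarAlgAut 𝕜 _ u (diagonal b))ᴴ).trace =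
      ∑ i, ((‖b i‖ ^ 2 : ℝ) : 𝕜) * ((star u : Matrix ι ι 𝕜) * ρ * u) i i := by
  conv_lhs => rw [← star_eq_conjTranspose, ← map_star, ← (conjStarAlgAut 𝕜 _ u).apply_symm_apply ρ,
    ← map_mul, ← map_mul, trace_conjStarAlgAut, conjStarAlgAut_symm_apply]
  simp only [trace, diag, star_eq_conjTranspose, diagonal_conjTranspose, diagonal_mul,
    mul_diagonal, Pi.star_apply]
  refine Finset.sum_congr rfl fun i _ => ?_
  rw [RCLike.ofReal_pow, ← RCLike.mul_conj, RCLike.star_def]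
  ring

theorem exp_conjStarAlgAut {𝕜 : Type*} [RCLike 𝕜] (u : unitary (Matrix ι ι 𝕜))
    (X : Matrix ι ι 𝕜) : exp (conjStarAlgAut 𝕜 _ u X) = conjStarAlgAut 𝕜 _ u (exp X) := by
  simpa [← Unitary.star_eq_inv] using Matrix.exp_units_conj (Unitary.toUnits u) X

theorem re_trace_conjStarAlgAut_diagonal_mul_mul_conjTranspose_le {𝕜 : Type*} [RCLike 𝕜]
    (u : unitary (Matrix ι ι 𝕜)) {ρ : Matrix ι ι 𝕜} (hρ : ρ.PosSemidef) {a b : ι → 𝕜} {S : ℝ}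
    (hab : ∀ i, ‖a i‖ ^ 2 ≤ S * ‖b i‖ ^ 2) :
    RCLike.re (conjStarAlgAut 𝕜 _ u (diagonal a) * ρ *
        (conjStarAlgAut 𝕜 _ u (diagonal a))ᴴ).trace ≤
      S * RCLike.re (conjStarAlgAut 𝕜 _ u (diagonal b) * ρ *
        (conjStarAlgAut 𝕜 _ u (diagonal b))ᴴ).trace := by
  simp only [trace_conjStarAlgAut_diagonal_mul_mul_conjTranspose, map_sum, RCLike.re_ofReal_mul,
    Finset.mul_sum, ← mul_assoc]
  gcongr with i
  · exact (RCLike.nonneg_iff.1 (hρ.conjTranspose_mul_mul_same (u : Matrix ι ι 𝕜)).diag_nonneg).1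
  · exact hab i

end Unitary

open Unitary

namespace Matrix.IsHermitian

variable {ι : Type*} [Fintype ι] [DecidableEq ι] {H : Matrix ι ι ℂ} (hH : H.IsHermitian)
include hH

theorem eigenvalues_mem_spectrum (i : ι) : (hH.eigenvalues i : ℂ) ∈ spectrum ℂ H :=
  hH.spectrum_eq_image_range ▸ ⟨hH.eigenvalues i, ⟨i, rfl⟩, rfl⟩

theorem exp_smul_eq (z : ℂ) :
    NormedSpace.exp (z • H) = conjStarAlgAut ℂ _ hH.eigenvectorUnitary
      (diagonal fun i => Complex.exp (z * hH.eigenvalues i)) := by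
  conv_lhs => rw [hH.spectral_theorem, ← map_smul, exp_conjStarAlgAut, ← diagonal_smul,
    exp_diagonal]
  congr 2
  ext i
  simp [← Complex.exp_eq_exp_ℂ]

theorem sum_smul_exp_smul_eq {κ : Type*} [Fintype κ] (c z : κ → ℂ) :
    ∑ k, c k • NormedSpace.exp (z k • H) = conjStarAlgAut ℂ _ hH.eigenvectorUnitary
      (diagonal fun i => ∑ k, c k * Complex.exp (z k * hH.eigenvalues i)) := by
  simp_rw [hH.exp_smul_eq, ← map_smul, ← map_sum]
  congr 1
  ext i j
  by_cases h : i = j <;> simp [Matrix.sum_apply, h]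

theorem eq_conjStarAlgAut_diagonal_of_ker_eq {Q : Matrix ι ι ℂ} (hQ : Q.IsHermitian)
    (hQQ : Q * Q = Q) (hker : ∀ v, Q *ᵥ v = 0 ↔ H *ᵥ v = 0) :
    Q = conjStarAlgAut ℂ _ hH.eigenvectorUnitary
      (diagonal fun i => if hH.eigenvalues i = 0 then 0 else 1) := by
  refine hQ.eq_of_idempotent_of_ker_eq ?_ hQQ ?_ fun v => ?_
  · refine (IsSelfAdjoint.map
      (isHermitian_diagonal_of_self_adjoint _ ?_).isSelfAdjoint _).isHermitian
    ext i
    split_ifs <;> simp [*]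
  · rw [← map_mul, diagonal_mul_diagonal]
    congr 2
    ext i
    split_ifs <;> simp
  · rw [hker, conjStarAlgAut_mulVec_eq_zero_iff]
    conv_lhs => rw [hH.spectral_theorem, conjStarAlgAut_mulVec_eq_zero_iff]
    refine diagonal_mulVec_eq_zero_iff_of_eq_zero_iff (fun i => ?_) _
    rw [Function.comp_apply]
    split_ifs <;> simp [*]

end Matrix.IsHermitian

theorem norm_sum_mul_exp_neg_I_int_mul_le {κ : Type*} [Fintype κ] (c : κ → ℝ) (m : κ → ℤ)
    (ω : ℝ) : ‖∑ k, (c k : ℂ) * Complex.exp (-(Complex.I * (m k : ℂ) * ω))‖ ≤ ∑ k, |c k| := by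
  refine norm_sum_le_of_le _ fun k _ => ?_
  have : -(Complex.I * (m k : ℂ) * ω) = ((-(m k * ω) : ℝ) : ℂ) * Complex.I := by
    push_cast
    ring
  rw [norm_mul, this, Complex.norm_exp_ofReal_mul_I, Complex.norm_real, Real.norm_eq_abs, mul_one]

theorem stmt11_general (n : ℕ)
    (H : Matrix (Fin n) (Fin n) ℂ) (hH : H.IsHermitian)
    (Δ : ℝ)
    (hspec : ∀ μ ∈ spectrum ℂ H, μ = 0 ∨ Δ ≤ ‖μ‖)
    (Q : Matrix (Fin n) (Fin n) ℂ)
    (hQherm : Q.IsHermitian) (hQidem : Q * Q = Q)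
    (hQker : ∀ v : Fin n → ℂ, Q.mulVec v = 0 ↔ H.mulVec v = 0)
    (ρ : Matrix (Fin n) (Fin n) ℂ) (hρ : ρ.PosSemidef)
    (N : ℕ) (c : Fin (2 * N + 1) → ℝ)
    (F : Matrix (Fin n) (Fin n) ℂ)
    (hF : F = ∑ k : Fin (2 * N + 1), (c k : ℂ) •
        exp ((-(Complex.I * (((k : ℤ) - (N : ℤ) : ℤ) : ℂ))) • H))
    (A : ℝ → ℂ)
    (hA : ∀ ω : ℝ, A ω = ∑ k : Fin (2 * N + 1),
        (c k : ℂ) * Complex.exp (-(Complex.I * (((k : ℤ) - (N : ℤ) : ℤ) : ℂ) * (ω : ℂ)))) :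
    ((F * (Q * ρ * Q) * Fᴴ).trace).re ≤
      sSup {x : ℝ | ∃ ω : ℝ, Δ ≤ |ω| ∧ x = ‖A ω‖ ^ 2} *
        ((Q * ρ * Q).trace).re := by
  set u := hH.eigenvectorUnitary
  set d := hH.eigenvalues
  set q : Fin n → ℂ := fun i => if d i = 0 then 0 else 1
  set S := sSup {x : ℝ | ∃ ω : ℝ, Δ ≤ |ω| ∧ x = ‖A ω‖ ^ 2}
  have hQ : Q = conjStarAlgAut ℂ _ u (diagonal q) :=
    hH.eq_conjStarAlgAut_diagonal_of_ker_eq hQherm hQidem hQker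
  have hFQ : F * Q = conjStarAlgAut ℂ _ u (diagonal fun i => A (d i) * q i) := by
    rw [hF, hH.sum_smul_exp_smul_eq, hQ, ← map_mul, diagonal_mul_diagonal]
    simp_rw [hA, neg_mul]
    rfl
  have hbdd : BddAbove {x : ℝ | ∃ ω : ℝ, Δ ≤ |ω| ∧ x = ‖A ω‖ ^ 2} := by
    refine ⟨(∑ k, |c k|) ^ 2, ?_⟩
    rintro _ ⟨ω, -, rfl⟩
    rw [hA]
    gcongr
    exact norm_sum_mul_exp_neg_I_int_mul_le c (fun k => (k : ℤ) - N) ω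
  have hterm : ∀ i, ‖A (d i) * q i‖ ^ 2 ≤ S * ‖q i‖ ^ 2 := by
    intro i
    by_cases hdi : d i = 0
    · simp [q, hdi]
    · have hΔ : Δ ≤ |d i| := by
        simpa using (hspec _ (hH.eigenvalues_mem_spectrum i)).resolve_left (by exact_mod_cast hdi)
      simpa [q, hdi] using le_csSup hbdd ⟨d i, hΔ, rfl⟩
  calc ((F * (Q * ρ * Q) * Fᴴ).trace).re = ((F * Q * ρ * (F * Q)ᴴ).trace).re := by
        rw [conjTranspose_mul, hQherm.eq]; simp only [mul_assoc]
    _ ≤ S * ((Q * ρ * Qᴴ).trace).re := by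
        rw [hFQ, hQ]
        exact re_trace_conjStarAlgAut_diagonal_mul_mul_conjTranspose_le u hρ hterm
    _ = S * ((Q * ρ * Q).trace).re := by rw [hQherm.eq]

/-- Eigenstate filtering bound: for `F = ∑_k c_k exp(−i k H)` with nonnegative real
coefficients and `A(ω) = ∑_k c_k exp(−i k ω)`,
`Re Tr(F (QρQ) F*) ≤ (sup_{|ω| ≥ Δ} |A(ω)|²) · Re Tr(QρQ)`,
where `Q` is the orthogonal projection onto the orthogonal complement of `ker H`.
Indices `k ∈ {−N,…,N}` are encoded as `k : Fin (2N+1)` with integer value `(k : ℤ) − N`. -/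
theorem stmt11 (n : ℕ) (hn : 1 ≤ n)
    (H : Matrix (Fin n) (Fin n) ℂ) (hH : H.IsHermitian)
    (Δ : ℝ) (hΔ : 0 < Δ)
    (hspec : ∀ μ ∈ spectrum ℂ H, μ = 0 ∨ Δ ≤ ‖μ‖)
    (Q : Matrix (Fin n) (Fin n) ℂ)
    (hQherm : Q.IsHermitian) (hQidem : Q * Q = Q)
    (hQker : ∀ v : Fin n → ℂ, Q.mulVec v = 0 ↔ H.mulVec v = 0)
    (ρ : Matrix (Fin n) (Fin n) ℂ) (hρ : ρ.PosSemidef)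
    (N : ℕ) (c : Fin (2 * N + 1) → ℝ) (hc : ∀ k, 0 ≤ c k)
    (F : Matrix (Fin n) (Fin n) ℂ)
    (hF : F = ∑ k : Fin (2 * N + 1), (c k : ℂ) •
        exp ((-(Complex.I * (((k : ℤ) - (N : ℤ) : ℤ) : ℂ))) • H))
    (A : ℝ → ℂ)
    (hA : ∀ ω : ℝ, A ω = ∑ k : Fin (2 * N + 1),
        (c k : ℂ) * Complex.exp (-(Complex.I * (((k : ℤ) - (N : ℤ) : ℤ) : ℂ) * (ω : ℂ)))) :
    ((F * (Q * ρ * Q) * Fᴴ).trace).re ≤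
      sSup {x : ℝ | ∃ ω : ℝ, Δ ≤ |ω| ∧ x = ‖A ω‖ ^ 2} *
        ((Q * ρ * Q).trace).re :=
  stmt11_general n H hH Δ hspec Q hQherm hQidem hQker ρ hρ N c F hF A hA
end

section
/- Let 0 < Δ < π/2 and 0 < ε < 1, and let n be a natural number with n ≥ log(4/ε)/(2·Δ). Then the n-th Chebyshev polynomial of the first kind satisfies T_n(1/cos Δ) ≥ 1/√ε. (Equivalently: the Dolph–Chebyshev window of length n = ⌈arcosh(1/√ε)/arcosh(sec Δ)⌉ ≤ ⌈log(4/ε)/(2Δ)⌉ achieves peak-to-sidelobe ratio 1/√ε for sidelobe region |ω| ≥ Δ.) -/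
open Real

private lemma sinh_le_mul_cosh {x : ℝ} (hx : 0 ≤ x) : Real.sinh x ≤ x * Real.cosh x := by
  have hmono : MonotoneOn (fun z : ℝ => z * Real.cosh z - Real.sinh z) (Set.Ici 0) := by
    apply monotoneOn_of_hasDerivWithinAt_nonneg (f' := fun z => z * Real.sinh z) (convex_Ici 0)
    · exact (continuous_id.mul Real.continuous_cosh).sub Real.continuous_sinh |>.continuousOn
    · intro y _
      have h : HasDerivAt (fun z : ℝ => z * Real.cosh z - Real.sinh z)
          (1 * Real.cosh y + y * Real.sinh y - Real.cosh y) y :=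
        ((hasDerivAt_id y).mul (Real.hasDerivAt_cosh y)).sub (Real.hasDerivAt_sinh y)
      have h2 : (1 * Real.cosh y + y * Real.sinh y - Real.cosh y) = y * Real.sinh y := by ring
      exact (h2 ▸ h).hasDerivWithinAt
    · intro y hy
      rw [interior_Ici] at hy
      exact mul_nonneg (le_of_lt hy) (by simpa using Real.sinh_le_sinh.mpr (le_of_lt hy) : 0 ≤ Real.sinh y)
  have := hmono (Set.self_mem_Ici) (Set.mem_Ici.mpr hx) hx
  simp at this
  linarith

private lemma cos_mul_cosh_le_one {x : ℝ} (hx : 0 ≤ x) (hx2 : x < Real.pi / 2) :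
    Real.cos x * Real.cosh x ≤ 1 := by
  have hanti : AntitoneOn (fun z : ℝ => Real.cos z * Real.cosh z) (Set.Icc 0 (Real.pi/2)) := by
    apply antitoneOn_of_hasDerivWithinAt_nonpos
      (f' := fun z => Real.cos z * Real.sinh z - Real.sin z * Real.cosh z) (convex_Icc _ _)
    · exact (Real.continuous_cos.mul Real.continuous_cosh).continuousOn
    · intro y _
      have h : HasDerivAt (fun z : ℝ => Real.cos z * Real.cosh z)
          (-Real.sin y * Real.cosh y + Real.cos y * Real.sinh y) y :=
        (Real.hasDerivAt_cos y).mul (Real.hasDerivAt_cosh y)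
      have h2 : (-Real.sin y * Real.cosh y + Real.cos y * Real.sinh y)
          = Real.cos y * Real.sinh y - Real.sin y * Real.cosh y := by ring
      exact (h2 ▸ h).hasDerivWithinAt
    · intro y hy
      rw [interior_Icc] at hy
      obtain ⟨hy0, hy2⟩ := hy
      have hcosy : 0 < Real.cos y := Real.cos_pos_of_mem_Ioo ⟨by linarith, hy2⟩
      have h1 : Real.sinh y ≤ y * Real.cosh y := sinh_le_mul_cosh hy0.le
      have h2 : y ≤ Real.tan y := Real.le_tan hy0.le hy2
      have h3 : y * Real.cos y ≤ Real.sin y := by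
        rw [Real.tan_eq_sin_div_cos] at h2
        calc y * Real.cos y ≤ (Real.sin y / Real.cos y) * Real.cos y := by
              exact mul_le_mul_of_nonneg_right h2 hcosy.le
          _ = Real.sin y := by field_simp
      have hcoshy : 0 < Real.cosh y := Real.cosh_pos y
      nlinarith [hcoshy]
  have h0 : (0:ℝ) ∈ Set.Icc (0:ℝ) (Real.pi/2) := ⟨le_refl _, by positivity⟩
  have hx' : x ∈ Set.Icc (0:ℝ) (Real.pi/2) := ⟨hx, hx2.le⟩
  have := hanti h0 hx' hx
  simpa using this

private lemma T_real_cosh (x : ℝ) (n : ℤ) :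
    (Polynomial.Chebyshev.T ℝ n).eval (Real.cosh x) = Real.cosh (n * x) := by
  have h := Polynomial.Chebyshev.T_complex_cos ((x : ℂ) * Complex.I) n
  rw [Complex.cos_mul_I] at h
  have h2 : ((n : ℂ) * ((x:ℂ) * Complex.I)) = ((n : ℝ) * x : ℝ) * Complex.I := by
    push_cast; ring
  rw [h2, Complex.cos_mul_I] at h
  have h3 : (((Polynomial.Chebyshev.T ℝ n).eval (Real.cosh x) : ℝ) : ℂ)
      = (Polynomial.Chebyshev.T ℂ n).eval ((Real.cosh x : ℝ) : ℂ) :=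
    Polynomial.Chebyshev.complex_ofReal_eval_T _ _
  rw [Complex.ofReal_cosh, h] at h3
  rw [← Complex.ofReal_cosh] at h3
  exact_mod_cast h3

/-- Dolph–Chebyshev window size: if `0 < Δ < π/2`, `0 < ε < 1` and
`n ≥ log(4/ε)/(2Δ)`, then `T_n(1/cos Δ) ≥ 1/√ε`. -/
theorem stmt12 (Δ ε : ℝ) (hΔ0 : 0 < Δ) (hΔ : Δ < Real.pi / 2)
    (hε0 : 0 < ε) (hε1 : ε < 1) (n : ℕ)
    (hn : Real.log (4 / ε) / (2 * Δ) ≤ (n : ℝ)) :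
    1 / Real.sqrt ε ≤ (Polynomial.Chebyshev.T ℝ (n : ℤ)).eval (1 / Real.cos Δ) := by
  have hcos : 0 < Real.cos Δ := Real.cos_pos_of_mem_Ioo ⟨by linarith, hΔ⟩
  set y : ℝ := 1 / Real.cos Δ with hy
  have hy1 : Real.cosh Δ ≤ y := by
    rw [hy, le_div_iff₀ hcos]
    have := cos_mul_cosh_le_one hΔ0.le hΔ
    linarith [this]
  have hyge1 : (1:ℝ) ≤ y := le_trans (Real.one_le_cosh Δ) hy1
  -- t = arcosh y
  set t : ℝ := Real.log (y + Real.sqrt (y^2 - 1)) with ht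
  have hsq : 0 ≤ y^2 - 1 := by nlinarith
  have hupos : 0 < y + Real.sqrt (y^2 - 1) := by positivity
  have hcosht : Real.cosh t = y := by
    rw [Real.cosh_eq, ht, Real.exp_log hupos, Real.exp_neg, Real.exp_log hupos]
    have hs : Real.sqrt (y^2-1) ^ 2 = y^2 - 1 := Real.sq_sqrt hsq
    have : (y + Real.sqrt (y^2-1)) * (y - Real.sqrt (y^2-1)) = 1 := by nlinarith
    field_simp
    nlinarith
  have htge : Δ ≤ t := by
    by_contra hlt
    push_neg at hlt
    have : Real.cosh t < Real.cosh Δ := by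
      rw [Real.cosh_lt_cosh]
      have ht0 : 0 ≤ t := Real.log_nonneg (by nlinarith [Real.sqrt_nonneg (y^2-1)])
      rw [abs_of_nonneg ht0, abs_of_nonneg hΔ0.le]
      exact hlt
    rw [hcosht] at this
    linarith
  have key : Real.log (4/ε) / 2 ≤ (n : ℝ) * t := by
    have h1 : Real.log (4/ε) / 2 ≤ (n:ℝ) * Δ := by
      rw [div_le_iff₀ (by linarith : (0:ℝ) < 2 * Δ)] at hn
      nlinarith
    have hn0 : (0:ℝ) ≤ n := Nat.cast_nonneg n
    nlinarith
  have h4 : (0:ℝ) < 4/ε := by positivity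
  have hs : 0 < Real.sqrt ε := Real.sqrt_pos.mpr hε0
  have hexp : Real.exp (Real.log (4/ε)/2) = 2 / Real.sqrt ε := by
    have h5 : (Real.exp (Real.log (4/ε)/2))^2 = 4/ε := by
      rw [sq, ← Real.exp_add]
      rw [show Real.log (4/ε)/2 + Real.log (4/ε)/2 = Real.log (4/ε) by ring]
      exact Real.exp_log h4
    have h6 : (2 / Real.sqrt ε)^2 = 4/ε := by
      rw [div_pow, Real.sq_sqrt hε0.le]; norm_num
    rw [← Real.sqrt_sq (Real.exp_pos _).le, h5, ← h6, Real.sqrt_sq (by positivity)]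
  calc 1 / Real.sqrt ε = Real.exp (Real.log (4/ε) / 2) / 2 := by
        rw [hexp]; ring
    _ ≤ Real.exp ((n:ℝ) * t) / 2 := by gcongr
    _ ≤ Real.cosh ((n:ℝ) * t) := by
        rw [Real.cosh_eq]
        have := Real.exp_pos (-((n:ℝ)*t))
        linarith
    _ = (Polynomial.Chebyshev.T ℝ (n:ℤ)).eval (Real.cosh t) := by
        rw [T_real_cosh]; norm_num
    _ = (Polynomial.Chebyshev.T ℝ (n:ℤ)).eval y := by rw [hcosht]
end

section
/- Let N ≥ 2 and let S be a subset of the index set {0,…,N−1} with 1 ≤ |S| = M ≤ N − 1. Let u ∈ ℂ^N be the unit vector with all entries equal to 1/√N, let P_𝓜 be the orthogonal projection onto the span of the standard basis vectors indexed by S, and for s ∈ [0,1] define the Hermitian matrix H(s) := (1 − s)·(1 − u·u*) + s·(1 − P_𝓜), where u·u* is the rank-one projection onto u. Then every eigenvalue of H(s) belongs to the set { (1 − √(1 − 4(1 − M/N)·s·(1 − s)))/2, (1 + √(1 − 4(1 − M/N)·s·(1 − s)))/2, 1 − s, 1 }. -/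
/-!
Both `A = u u*` and `P_𝓜` are projections, and `A P_𝓜 A = (M/N) A` since `u* P_𝓜 u = M/N`.
These relations alone force `(H - 1) (H - (1 - s)) (H² - H + (1 - M/N) s (1 - s)) = 0`, so every
eigenvalue of `H` is a root of this quartic. The discriminant of the quadratic factor is
`M/N + (1 - M/N) (2s - 1)² ≥ 0`, so its roots are the two real numbers `(1 ± √…)/2`.
-/

open Matrix Polynomial

section Annihilator

variable {K R : Type*} [CommRing K] [Ring R] [Algebra K R]

theorem aeval_annihilator_of_isIdempotentElem {A B : R} (hA : IsIdempotentElem A)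
    (hB : IsIdempotentElem B) {r : K} (hABA : A * B * A = r • A) (t : K) :
    aeval ((1 - t) • (1 - A) + t • (1 - B))
      ((X - 1) * (X - C (1 - t)) * (X ^ 2 - X + C ((1 - r) * t * (1 - t)))) = 0 := by
  have hA' : ∀ x : R, A * (A * x) = A * x := fun x => by rw [← mul_assoc, hA.eq]
  have hB' : ∀ x : R, B * (B * x) = B * x := fun x => by rw [← mul_assoc, hB.eq]
  have hABA₀ : A * (B * A) = r • A := by rw [← mul_assoc, hABA]
  have hABA' : ∀ x : R, A * (B * (A * x)) = r • (A * x) := fun x => by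
    rw [← mul_assoc, ← mul_assoc, hABA, smul_mul_assoc]
  simp only [map_mul, map_sub, map_add, map_pow, aeval_X, aeval_C, map_one,
    Algebra.algebraMap_eq_smul_one]
  simp only [sq, sub_mul, mul_sub, add_mul, mul_add, smul_mul_assoc, mul_smul_comm, mul_one,
    one_mul, smul_smul, smul_sub, smul_add, mul_assoc, hA.eq, hB.eq, hABA₀, hA', hB', hABA']
  match_scalars <;> ring

end Annihilator

theorem spectrum.eval_eq_zero_of_aeval_eq_zero {𝕜 A : Type*} [Field 𝕜] [Ring A] [Algebra 𝕜 A]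
    {a : A} {p : 𝕜[X]} (hp : aeval a p = 0) {z : 𝕜} (hz : z ∈ spectrum 𝕜 a) :
    p.eval z = 0 := by
  have hmem := spectrum.subset_polynomial_aeval a p ⟨z, hz, rfl⟩
  rw [hp, spectrum.mem_iff, sub_zero] at hmem
  by_contra hne
  exact hmem ((IsUnit.mk0 _ hne).map (algebraMap 𝕜 A))

namespace Matrix

variable {n α : Type*} [Fintype n]

theorem isIdempotentElem_vecMulVec [CommSemiring α] {u v : n → α} (h : v ⬝ᵥ u = 1) :
    IsIdempotentElem (vecMulVec u v) := by
  rw [IsIdempotentElem, vecMulVec_mul_vecMulVec, h, one_smul]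

theorem vecMulVec_mul_mul_vecMulVec [CommSemiring α] (u v : n → α) (B : Matrix n n α) :
    vecMulVec u v * B * vecMulVec u v = (v ⬝ᵥ B *ᵥ u) • vecMulVec u v := by
  rw [Matrix.mul_assoc, mul_vecMulVec, vecMulVec_mul_vecMulVec, vecMulVec_smul]

theorem isIdempotentElem_diagonal_ite_mem [DecidableEq n] [Semiring α] (S : Finset n) :
    IsIdempotentElem (diagonal fun i => if i ∈ S then (1 : α) else 0) := by
  rw [IsIdempotentElem, diagonal_mul_diagonal]
  congr 1
  ext i
  split_ifs <;> simp

end Matrix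

theorem star_uniform_dotProduct_diagonal_mulVec_uniform {N : ℕ} (d : Fin N → ℂ) :
    star (fun _ : Fin N => ((1 / Real.sqrt N : ℝ) : ℂ)) ⬝ᵥ diagonal d *ᵥ
      (fun _ => ((1 / Real.sqrt N : ℝ) : ℂ)) = (∑ i, d i) / N := by
  have hsq : ((1 / Real.sqrt N : ℝ) : ℂ) * ((1 / Real.sqrt N : ℝ) : ℂ) = 1 / N := by
    rw [← Complex.ofReal_mul, div_mul_div_comm, one_mul, Real.mul_self_sqrt (Nat.cast_nonneg N)]
    push_cast
    rfl
  simp only [dotProduct, mulVec_diagonal, Pi.star_apply, Complex.star_def, Complex.conj_ofReal,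
    Finset.sum_div]
  refine Finset.sum_congr rfl fun i _ => ?_
  linear_combination d i * hsq

theorem sq_sub_self_add_eq_mul {K : Type*} [Field K] [NeZero (2 : K)] {c d : K}
    (hd : d ^ 2 = 1 - 4 * c) (z : K) :
    z ^ 2 - z + c = (z - (1 - d) / 2) * (z - (1 + d) / 2) := by
  field_simp
  linear_combination hd

theorem one_sub_four_mul_mul_mul_one_sub_nonneg {K : Type*} [Field K] [LinearOrder K]
    [IsStrictOrderedRing K] {q : K} (hq₀ : 0 ≤ q) (hq₁ : q ≤ 1) (s : K) :
    0 ≤ 1 - 4 * q * s * (1 - s) := by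
  nlinarith [mul_nonneg hq₀ (sq_nonneg (2 * s - 1))]

theorem stmt13_general (N : ℕ) (hN : 2 ≤ N) (S : Finset (Fin N)) (M : ℕ)
    (hM : M = S.card)
    (u : Fin N → ℂ) (hu : u = fun _ => ((1 / Real.sqrt N : ℝ) : ℂ))
    (Pm : Matrix (Fin N) (Fin N) ℂ)
    (hPm : Pm = Matrix.diagonal fun i => if i ∈ S then (1 : ℂ) else 0)
    (s : ℝ)
    (H : Matrix (Fin N) (Fin N) ℂ)
    (hH : H = (1 - s) • ((1 : Matrix (Fin N) (Fin N) ℂ) - vecMulVec u (star u)) +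
        s • ((1 : Matrix (Fin N) (Fin N) ℂ) - Pm)) :
    ∀ z ∈ spectrum ℂ H,
      z ∈ ({(((1 - Real.sqrt (1 - 4 * (1 - (M : ℝ) / N) * s * (1 - s))) / 2 : ℝ) : ℂ),
            (((1 + Real.sqrt (1 - 4 * (1 - (M : ℝ) / N) * s * (1 - s))) / 2 : ℝ) : ℂ),
            ((1 - s : ℝ) : ℂ), (1 : ℂ)} : Set ℂ) := by
  intro z hz
  have hN₀ : (N : ℂ) ≠ 0 := Nat.cast_ne_zero.mpr (by omega)
  have huu : star u ⬝ᵥ u = 1 := by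
    simpa [hu, diagonal_one, hN₀] using
      star_uniform_dotProduct_diagonal_mulVec_uniform fun _ : Fin N => 1
  have huPu : star u ⬝ᵥ Pm *ᵥ u = (M : ℂ) / N := by
    rw [hu, hPm, star_uniform_dotProduct_diagonal_mulVec_uniform, Finset.sum_boole, hM]
    simp
  have hABA : vecMulVec u (star u) * Pm * vecMulVec u (star u) =
      ((M : ℂ) / N) • vecMulVec u (star u) := by
    rw [vecMulVec_mul_mul_vecMulVec, huPu]
  have hHc : H = (1 - (s : ℂ)) • (1 - vecMulVec u (star u)) + (s : ℂ) • (1 - Pm) := by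
    rw [hH, ← Complex.coe_smul, ← Complex.coe_smul, Complex.ofReal_sub, Complex.ofReal_one]
  have hroot := spectrum.eval_eq_zero_of_aeval_eq_zero (hHc ▸
    aeval_annihilator_of_isIdempotentElem (isIdempotentElem_vecMulVec huu)
      (hPm ▸ isIdempotentElem_diagonal_ite_mem S) hABA (s : ℂ)) hz
  have hMN : M ≤ N := hM ▸ (Finset.card_le_univ S).trans_eq (Fintype.card_fin N)
  have hdisc := one_sub_four_mul_mul_mul_one_sub_nonneg
    (sub_nonneg.mpr (div_le_one_of_le₀ (Nat.cast_le.mpr hMN) (Nat.cast_nonneg N)))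
    (sub_le_self 1 (by positivity)) s
  have hd : ((Real.sqrt (1 - 4 * (1 - (M : ℝ) / N) * s * (1 - s)) : ℝ) : ℂ) ^ 2 =
      1 - 4 * ((1 - (M : ℂ) / N) * s * (1 - s)) := by
    rw [← Complex.ofReal_pow, Real.sq_sqrt hdisc]
    push_cast
    ring
  simp only [eval_mul, eval_sub, eval_X, eval_one, eval_C, eval_add, eval_pow,
    sq_sub_self_add_eq_mul hd, mul_eq_zero, sub_eq_zero] at hroot
  simp only [Set.mem_insert_iff, Set.mem_singleton_iff]
  push_cast
  tauto

/-- Spectrum of the Grover interpolation Hamiltonian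
`H(s) = (1−s)(1 − u u*) + s(1 − P_𝓜)`: every eigenvalue lies in
`{(1 ± √(1 − 4(1 − M/N)s(1−s)))/2, 1 − s, 1}`. -/
theorem stmt13 (N : ℕ) (hN : 2 ≤ N) (S : Finset (Fin N)) (M : ℕ)
    (hM : M = S.card) (hM1 : 1 ≤ M) (hM2 : M ≤ N - 1)
    (u : Fin N → ℂ) (hu : u = fun _ => ((1 / Real.sqrt N : ℝ) : ℂ))
    (Pm : Matrix (Fin N) (Fin N) ℂ)
    (hPm : Pm = Matrix.diagonal fun i => if i ∈ S then (1 : ℂ) else 0)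
    (s : ℝ) (hs : s ∈ Set.Icc (0:ℝ) 1)
    (H : Matrix (Fin N) (Fin N) ℂ)
    (hH : H = (1 - s) • ((1 : Matrix (Fin N) (Fin N) ℂ) - vecMulVec u (star u)) +
        s • ((1 : Matrix (Fin N) (Fin N) ℂ) - Pm)) :
    ∀ z ∈ spectrum ℂ H,
      z ∈ ({(((1 - Real.sqrt (1 - 4 * (1 - (M : ℝ) / N) * s * (1 - s))) / 2 : ℝ) : ℂ),
            (((1 + Real.sqrt (1 - 4 * (1 - (M : ℝ) / N) * s * (1 - s))) / 2 : ℝ) : ℂ),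
            ((1 - s : ℝ) : ℂ), (1 : ℂ)} : Set ℂ) :=
  stmt13_general N hN S M hM u hu Pm hPm s H hH
end

section
/- For every real p > 1 there exists a constant C > 0 such that for all r ∈ (0, 1/4]: ∫₀¹ (1 − 4·(1 − r)·s·(1 − s))^{−p/2} ds ≤ C · r^{(1−p)/2}. In particular, with Δ_r(s) := √(1 − 4(1−r)s(1−s)) and Δ_m := √r = min_{s∈[0,1]} Δ_r(s), one has ∫₀¹ Δ_r(s)^{−p} ds = O(Δ_m^{1−p}) uniformly in r. -/
open intervalIntegral Real

/-- Grover gap integral, `p > 1`: there is `C > 0` with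
`∫₀¹ Δ_r(s)^{−p} ds ≤ C · r^{(1−p)/2}` for all `r ∈ (0, 1/4]`,
where `Δ_r(s) = √(1 − 4(1−r)s(1−s))`. -/
theorem stmt14 (p : ℝ) (hp : 1 < p) :
    ∃ C > 0, ∀ r ∈ Set.Ioc (0 : ℝ) (1 / 4),
      (∫ s in (0:ℝ)..1, (1 - 4 * (1 - r) * s * (1 - s)) ^ (-p / 2)) ≤
        C * r ^ ((1 - p) / 2) := by
  have hp1 : (0:ℝ) < p - 1 := by linarith
  refine ⟨2 ^ (p / 2) * 2 / (p - 1), by positivity, ?_⟩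
  rintro r ⟨hr0, hr4⟩
  set a := Real.sqrt r with ha
  have ha0 : 0 < a := Real.sqrt_pos.mpr hr0
  have ha2 : a ^ 2 = r := Real.sq_sqrt hr0.le
  have hr1 : r ≤ 1 / 4 := hr4
  -- base positivity
  have hbase : ∀ s : ℝ, 0 < 1 - 4 * (1 - r) * s * (1 - s) := by
    intro s
    nlinarith [sq_nonneg (s - 1/2), sq_nonneg (2*s - 1)]
  have hgpos : ∀ s : ℝ, 0 < a + |s - 1/2| := fun s =>
    lt_of_lt_of_le ha0 (le_add_of_nonneg_right (abs_nonneg _))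
  -- continuity / integrability
  have hf_cont : Continuous fun s : ℝ => (1 - 4 * (1 - r) * s * (1 - s)) ^ (-p / 2) := by
    apply Continuous.rpow_const (by continuity)
    intro s; exact Or.inl (hbase s).ne'
  have hh_cont : Continuous fun s : ℝ => (a + |s - 1/2|) ^ (-p) := by
    apply Continuous.rpow_const (by continuity)
    intro s; exact Or.inl (hgpos s).ne'
  have hg_cont : Continuous fun s : ℝ => 2 ^ (p/2) * (a + |s - 1/2|) ^ (-p) :=
    continuous_const.mul hh_cont
  -- pointwise bound
  have key : ∀ s ∈ Set.uIcc (0:ℝ) 1,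
      (1 - 4 * (1 - r) * s * (1 - s)) ^ (-p / 2)
        ≤ 2 ^ (p/2) * (a + |s - 1/2|) ^ (-p) := by
    intro s _
    set b := |s - 1/2| with hb
    have hb0 : 0 ≤ b := abs_nonneg _
    have hb2 : b ^ 2 = (s - 1/2) ^ 2 := sq_abs _
    have hquad : (a + b) ^ 2 / 2 ≤ 1 - 4 * (1 - r) * s * (1 - s) := by
      nlinarith [sq_nonneg (a - b), sq_nonneg b]
    have hx : (0:ℝ) < (a + b) ^ 2 / 2 := by positivity
    have h1 : (1 - 4 * (1 - r) * s * (1 - s)) ^ (-p / 2)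
        ≤ ((a + b) ^ 2 / 2) ^ (-p / 2) :=
      Real.rpow_le_rpow_of_nonpos hx hquad (by linarith)
    refine h1.trans_eq ?_
    have hab : (0:ℝ) ≤ a + b := by positivity
    rw [Real.div_rpow (by positivity) (by norm_num), ← Real.rpow_natCast (a + b) 2,
      ← Real.rpow_mul hab,
      show ((2:ℕ):ℝ) * (-p / 2) = -p by push_cast; ring,
      show -p / 2 = -(p / 2) by ring,
      Real.rpow_neg (by norm_num : (0:ℝ) ≤ 2), div_eq_mul_inv, inv_inv, mul_comm]
  -- integral monotonicity
  have hmono : (∫ s in (0:ℝ)..1, (1 - 4 * (1 - r) * s * (1 - s)) ^ (-p / 2))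
      ≤ ∫ s in (0:ℝ)..1, 2 ^ (p/2) * (a + |s - 1/2|) ^ (-p) := by
    apply intervalIntegral.integral_mono_on (by norm_num)
      (hf_cont.intervalIntegrable _ _) (hg_cont.intervalIntegrable _ _)
    intro s hs
    exact key s (by simpa [Set.uIcc_of_le (by norm_num : (0:ℝ) ≤ 1)] using hs)
  -- compute the majorant integral
  have hsplit : (∫ s in (0:ℝ)..1, (a + |s - 1/2|) ^ (-p))
      = (∫ s in (0:ℝ)..(1/2), (a + |s - 1/2|) ^ (-p))
        + ∫ s in (1/2:ℝ)..1, (a + |s - 1/2|) ^ (-p) :=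
    (intervalIntegral.integral_add_adjacent_intervals
      (hh_cont.intervalIntegrable _ _) (hh_cont.intervalIntegrable _ _)).symm
  have hsym : (∫ s in (1/2:ℝ)..1, (a + |s - 1/2|) ^ (-p))
      = ∫ s in (0:ℝ)..(1/2), (a + |s - 1/2|) ^ (-p) := by
    have h := intervalIntegral.integral_comp_sub_left
      (fun s => (a + |s - 1/2|) ^ (-p)) 1 (a := 0) (b := 1/2)
    rw [show (1:ℝ) - 1/2 = 1/2 by norm_num, show (1:ℝ) - 0 = 1 by norm_num] at h
    rw [← h]
    apply intervalIntegral.integral_congr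
    intro s _
    simp only
    rw [show (1:ℝ) - s - 1/2 = -(s - 1/2) by ring, abs_neg]
  have hhalf : (∫ s in (0:ℝ)..(1/2), (a + |s - 1/2|) ^ (-p))
      ≤ a ^ (1 - p) / (p - 1) := by
    have heq : (∫ s in (0:ℝ)..(1/2), (a + |s - 1/2|) ^ (-p))
        = ∫ s in (0:ℝ)..(1/2), (a + 1/2 - s) ^ (-p) := by
      apply intervalIntegral.integral_congr
      intro s hs
      rw [Set.uIcc_of_le (by norm_num : (0:ℝ) ≤ 1/2)] at hs
      simp only
      rw [abs_of_nonpos (by linarith [hs.2] : s - 1/2 ≤ 0)]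
      ring_nf
    have hshift : (∫ s in (0:ℝ)..(1/2), (a + 1/2 - s) ^ (-p))
        = ∫ x in a..(a + 1/2), x ^ (-p) := by
      have h := intervalIntegral.integral_comp_sub_left
        (fun x => x ^ (-p)) (a + 1/2) (a := 0) (b := 1/2)
      rw [show a + 1/2 - 1/2 = a by ring, show a + 1/2 - 0 = a + 1/2 by ring] at h
      rw [← h]
    have hval : (∫ x in a..(a + 1/2), x ^ (-p))
        = ((a + 1/2) ^ (-p + 1) - a ^ (-p + 1)) / (-p + 1) := by
      apply integral_rpow
      right
      constructor
      · intro h; rw [neg_eq_iff_eq_neg] at h; linarith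
      · rw [Set.uIcc_of_le (by linarith)]
        intro h
        exact absurd h.1 (not_le.mpr ha0)
    rw [heq, hshift, hval]
    have hpos : (0:ℝ) ≤ (a + 1/2) ^ (-p + 1) := Real.rpow_nonneg (by positivity) _
    rw [show ((a + 1/2) ^ (-p + 1) - a ^ (-p + 1)) / (-p + 1)
          = (a ^ (-p + 1) - (a + 1/2) ^ (-p + 1)) / (p - 1) by
        rw [show -p + 1 = -(p - 1) by ring, div_neg]; ring,
      show (1:ℝ) - p = -p + 1 by ring]
    gcongr
    linarith
  -- put everything together
  have hconst : (∫ s in (0:ℝ)..1, 2 ^ (p/2) * (a + |s - 1/2|) ^ (-p))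
      = 2 ^ (p/2) * ∫ s in (0:ℝ)..1, (a + |s - 1/2|) ^ (-p) :=
    intervalIntegral.integral_const_mul _ _
  have hfinal : a ^ (1 - p) = r ^ ((1 - p) / 2) := by
    rw [ha, Real.sqrt_eq_rpow, ← Real.rpow_mul hr0.le]
    congr 1
    ring
  calc (∫ s in (0:ℝ)..1, (1 - 4 * (1 - r) * s * (1 - s)) ^ (-p / 2))
      ≤ ∫ s in (0:ℝ)..1, 2 ^ (p/2) * (a + |s - 1/2|) ^ (-p) := hmono
    _ = 2 ^ (p/2) * ∫ s in (0:ℝ)..1, (a + |s - 1/2|) ^ (-p) := hconst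
    _ = 2 ^ (p/2) * ((∫ s in (0:ℝ)..(1/2), (a + |s - 1/2|) ^ (-p))
          + ∫ s in (0:ℝ)..(1/2), (a + |s - 1/2|) ^ (-p)) := by rw [hsplit, hsym]
    _ ≤ 2 ^ (p/2) * (a ^ (1 - p) / (p - 1) + a ^ (1 - p) / (p - 1)) := by
        apply mul_le_mul_of_nonneg_left (by linarith) (by positivity)
    _ = 2 ^ (p / 2) * 2 / (p - 1) * r ^ ((1 - p) / 2) := by
        rw [← hfinal]; field_simp; ring
end

section
/- There exists a constant C > 0 such that for all r ∈ (0, 1/4]: ∫₀¹ (1 − 4·(1 − r)·s·(1 − s))^{−1/2} ds ≤ C · (1 + log(1/r)). In particular, ∫₀¹ Δ_r(s)^{−1} ds = O(log(1/r)). -/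
/-!
Writing `u = 2s - 1`, one has `Δ_r(s)² = r + (1 - r) u²`, an even function of `u`, so the integral
equals `∫₀¹ (r + (1 - r) u²)^(-1/2) du`. For `r ≤ 1/2`,
`(√r + u)² ≤ 2 (r + u²) ≤ 4 (r + (1 - r) u²)`, so the integrand is at most `2 / (√r + u)`, whose
integral is `2 log ((√r + 1) / √r) = log (1/r) + 2 log (1 + √r)`.
-/

open Real intervalIntegral MeasureTheory

theorem integral_comp_two_mul_sub_one_of_even {f : ℝ → ℝ} (hf : ∀ u, f (-u) = f u)
    (hint : IntervalIntegrable f volume (-1) 1) :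
    ∫ s in (0 : ℝ)..1, f (2 * s - 1) = ∫ u in (0 : ℝ)..1, f u := by
  have hneg : ∫ u in (-1 : ℝ)..0, f u = ∫ u in (0 : ℝ)..1, f u := by
    simpa [hf] using (integral_comp_neg (a := (0 : ℝ)) (b := 1) f).symm
  rw [integral_comp_mul_sub f two_ne_zero]
  norm_num
  rw [← integral_add_adjacent_intervals (b := 0)
    (hint.mono_set (by simp [Set.uIcc_of_le, Set.Icc_subset_Icc]))
    (hint.mono_set (by simp [Set.uIcc_of_le, Set.Icc_subset_Icc])), hneg]
  ring

theorem integral_inv_const_add {a b c : ℝ} (hb : 0 < a + b) (hc : 0 < a + c) :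
    ∫ u in b..c, (a + u)⁻¹ = log ((a + c) / (a + b)) := by
  rw [integral_comp_add_left (fun x => x⁻¹), integral_inv_of_pos hb hc]

theorem rpow_neg_half_le_two_mul_inv {r u : ℝ} (hr : 0 < r) (hr2 : r ≤ 1 / 2) (hu : 0 ≤ u) :
    (r + (1 - r) * u ^ 2) ^ (-(1 : ℝ) / 2) ≤ 2 * (√r + u)⁻¹ := by
  have hpos : 0 < r + (1 - r) * u ^ 2 := by nlinarith
  have hsum : √r + u ≤ 2 * √(r + (1 - r) * u ^ 2) := by
    rw [← pow_le_pow_iff_left₀ (by positivity) (by positivity) two_ne_zero, mul_pow,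
      sq_sqrt hpos.le]
    nlinarith [sq_sqrt hr.le, sq_nonneg (√r - u)]
  calc (r + (1 - r) * u ^ 2) ^ (-(1 : ℝ) / 2) = (√(r + (1 - r) * u ^ 2))⁻¹ := by
        rw [neg_div, rpow_neg hpos.le, sqrt_eq_rpow]
    _ ≤ ((√r + u) / 2)⁻¹ := inv_anti₀ (by positivity) (by linarith)
    _ = 2 * (√r + u)⁻¹ := by rw [inv_div, div_eq_mul_inv]

theorem integral_grover_gap_inv_le {r : ℝ} (hr : 0 < r) (hr2 : r ≤ 1 / 2) :
    ∫ s in (0 : ℝ)..1, (1 - 4 * (1 - r) * s * (1 - s)) ^ (-(1 : ℝ) / 2) ≤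
      2 * log ((√r + 1) / √r) := by
  set g : ℝ → ℝ := fun u => (r + (1 - r) * u ^ 2) ^ (-(1 : ℝ) / 2)
  have hg : Continuous g :=
    (by fun_prop : Continuous fun u : ℝ => r + (1 - r) * u ^ 2).rpow_const
      fun u => Or.inl (by nlinarith)
  have hsqrt : 0 < √r := sqrt_pos.2 hr
  have hbound_int : IntervalIntegrable (fun u : ℝ => 2 * (√r + u)⁻¹) volume 0 1 :=
    (intervalIntegrable_inv (fun u hu => by
      rw [Set.uIcc_of_le zero_le_one] at hu; linarith [hu.1]) (by fun_prop)).const_mul 2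
  calc ∫ s in (0 : ℝ)..1, (1 - 4 * (1 - r) * s * (1 - s)) ^ (-(1 : ℝ) / 2)
      = ∫ s in (0 : ℝ)..1, g (2 * s - 1) := by
        congr 1; ext s
        rw [show 1 - 4 * (1 - r) * s * (1 - s) = r + (1 - r) * (2 * s - 1) ^ 2 by ring]
    _ = ∫ u in (0 : ℝ)..1, g u :=
        integral_comp_two_mul_sub_one_of_even (fun u => by simp only [g, neg_sq])
          (hg.intervalIntegrable _ _)
    _ ≤ ∫ u in (0 : ℝ)..1, 2 * (√r + u)⁻¹ :=
        integral_mono_on zero_le_one (hg.intervalIntegrable _ _) hbound_int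
          fun u hu => rpow_neg_half_le_two_mul_inv hr hr2 hu.1
    _ = 2 * log ((√r + 1) / √r) := by
        rw [intervalIntegral.integral_const_mul,
          integral_inv_const_add (by simpa) (by positivity), add_zero]

/-- Grover gap integral, `p = 1`: there is `C > 0` with
`∫₀¹ Δ_r(s)^{−1} ds ≤ C·(1 + log(1/r))` for all `r ∈ (0, 1/4]`,
where `Δ_r(s) = √(1 − 4(1−r)s(1−s))`. -/
theorem stmt15 :
    ∃ C > 0, ∀ r ∈ Set.Ioc (0 : ℝ) (1 / 4),
      (∫ s in (0:ℝ)..1, (1 - 4 * (1 - r) * s * (1 - s)) ^ (-(1:ℝ) / 2)) ≤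
        C * (1 + Real.log (1 / r)) := by
  refine ⟨1, one_pos, fun r ⟨hr, hr4⟩ => ?_⟩
  have hsqrt : 0 < √r := sqrt_pos.2 hr
  have hsqrt_le : √r ≤ 1 / 2 := by nlinarith [sq_sqrt hr.le]
  have hlog : log (√r + 1) ≤ √r := by
    linarith [log_le_sub_one_of_pos (by linarith : 0 < √r + 1)]
  calc (∫ s in (0:ℝ)..1, (1 - 4 * (1 - r) * s * (1 - s)) ^ (-(1:ℝ) / 2))
      ≤ 2 * log ((√r + 1) / √r) := integral_grover_gap_inv_le hr (by linarith)
    _ = 2 * log (√r + 1) + log (1 / r) := by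
        rw [log_div (by positivity) hsqrt.ne', log_sqrt hr.le, one_div, log_inv]; ring
    _ ≤ 1 * (1 + log (1 / r)) := by linarith
end

section
/- For every real p > 1 there exists a constant C > 0 such that for all κ ≥ 1: ∫₀¹ ((1 − s)² + (s/κ)²)^{−p/2} ds ≤ C · κ^{p−1}. In particular, with Δ_κ(s) := √((1−s)² + (s/κ)²) and Δ_m := 1/(2κ) ≤ min_{s∈[0,1]} Δ_κ(s), one has ∫₀¹ Δ_κ(s)^{−p} ds = O(Δ_m^{1−p}) uniformly in κ. -/
open Real intervalIntegral

/-- Pointwise comparison: the gap integrand is bounded by a power of a linear function. -/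
lemma stmt17_aux_ptwise (p κ s : ℝ) (hp : 1 < p) (hκ : 1 ≤ κ) (hs : s ∈ Set.Icc (0:ℝ) 1) :
    ((1 - s) ^ 2 + (s / κ) ^ 2) ^ (-p / 2)
      ≤ (2:ℝ) ^ (p/2) * (1 - (1 - 1/κ) * s) ^ (-p) := by
  have hκ0 : (0:ℝ) < κ := lt_of_lt_of_le one_pos hκ
  obtain ⟨hs0, hs1⟩ := hs
  have hκi : (0:ℝ) < 1/κ := by positivity
  have hκi1 : 1/κ ≤ 1 := by rw [div_le_one hκ0]; exact hκ
  have hu : 0 < 1 - (1 - 1/κ) * s := by nlinarith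
  have hbase : 0 < (1 - s) ^ 2 + (s / κ) ^ 2 := by
    rcases eq_or_lt_of_le hs1 with h | h
    · have h2 : (0:ℝ) < (s/κ)^2 := by rw [h]; positivity
      nlinarith [sq_nonneg (1 - s)]
    · nlinarith [sq_nonneg (s/κ)]
  have hkey : (1 - (1 - 1/κ) * s) ^ 2 / 2 ≤ (1 - s) ^ 2 + (s / κ) ^ 2 := by
    have h1 : 1 - (1 - 1/κ) * s = (1 - s) + s/κ := by ring
    rw [h1]
    nlinarith [sq_nonneg ((1 - s) - s/κ)]
  have hmono : ((1 - s) ^ 2 + (s / κ) ^ 2) ^ (-p / 2)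
      ≤ ((1 - (1 - 1/κ) * s) ^ 2 / 2) ^ (-p / 2) := by
    apply Real.rpow_le_rpow_of_nonpos (by positivity) hkey
    linarith
  refine hmono.trans_eq ?_
  rw [Real.div_rpow (sq_nonneg _) (by norm_num : (0:ℝ) ≤ 2),
    ← Real.rpow_natCast (1 - (1 - 1/κ) * s) 2, ← Real.rpow_mul hu.le,
    div_eq_mul_inv, ← Real.rpow_neg (by norm_num : (0:ℝ) ≤ 2), mul_comm]
  congr 1
  · congr 1; ring
  · congr 1; push_cast; ring

/-- QLSP gap integral, `p > 1`: there is `C > 0` with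
`∫₀¹ Δ_κ(s)^{−p} ds ≤ C · κ^{p−1}` for all `κ ≥ 1`,
where `Δ_κ(s) = √((1−s)² + (s/κ)²)`. -/
theorem stmt17 (p : ℝ) (hp : 1 < p) :
    ∃ C > 0, ∀ κ : ℝ, 1 ≤ κ →
      (∫ s in (0:ℝ)..1, ((1 - s) ^ 2 + (s / κ) ^ 2) ^ (-p / 2)) ≤ C * κ ^ (p - 1) := by
  have hp1 : (0:ℝ) < p - 1 := by linarith
  refine ⟨(2:ℝ) ^ (p/2) * (2 + 2/(p-1)), by positivity, ?_⟩
  intro κ hκ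
  have hκ0 : (0:ℝ) < κ := lt_of_lt_of_le one_pos hκ
  have hκinv : 0 < 1/κ := by positivity
  have hκinv1 : 1/κ ≤ 1 := by rw [div_le_one hκ0]; exact hκ
  set a : ℝ := 1 - 1/κ with ha_def
  clear_value a
  have ha0 : 0 ≤ a := by simp only [ha_def]; linarith
  have ha1 : a < 1 := by simp only [ha_def]; linarith
  have hu : ∀ s ∈ Set.Icc (0:ℝ) 1, 1/κ ≤ 1 - a * s := by
    intro s hs
    have h1 : a * s ≤ a * 1 := mul_le_mul_of_nonneg_left hs.2 ha0
    simp only [ha_def] at h1 ⊢; linarith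
  have hfint : IntervalIntegrable (fun s => ((1 - s) ^ 2 + (s / κ) ^ 2) ^ (-p / 2))
      MeasureTheory.volume 0 1 := by
    apply ContinuousOn.intervalIntegrable
    rw [Set.uIcc_of_le (by norm_num : (0:ℝ) ≤ 1)]
    apply ContinuousOn.rpow_const
    · fun_prop
    · intro s hs
      left
      rcases eq_or_lt_of_le hs.2 with h | h
      · have h2 : (0:ℝ) < (s/κ)^2 := by rw [h]; exact pow_pos hκinv 2
        nlinarith [sq_nonneg (1 - s)]
      · have : (0:ℝ) < (1 - s)^2 := pow_pos (by linarith) 2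
        nlinarith [sq_nonneg (s/κ)]
  have hgint0 : IntervalIntegrable (fun s => (1 - a * s) ^ (-p))
      MeasureTheory.volume 0 1 := by
    apply ContinuousOn.intervalIntegrable
    rw [Set.uIcc_of_le (by norm_num : (0:ℝ) ≤ 1)]
    apply ContinuousOn.rpow_const
    · fun_prop
    · intro s hs; left; exact (lt_of_lt_of_le hκinv (hu s hs)).ne'
  have hgint : IntervalIntegrable (fun s => (2:ℝ) ^ (p/2) * (1 - a * s) ^ (-p))
      MeasureTheory.volume 0 1 := hgint0.const_mul _
  have hmono := intervalIntegral.integral_mono_on (by norm_num : (0:ℝ) ≤ 1) hfint hgint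
    (fun s hs => by rw [ha_def]; exact stmt17_aux_ptwise p κ s hp hκ hs)
  refine hmono.trans ?_
  rw [intervalIntegral.integral_const_mul]
  have hκp : (1:ℝ) ≤ κ ^ (p-1) := Real.one_le_rpow hκ (by linarith)
  have hκpnn : (0:ℝ) ≤ κ ^ (p-1) := by linarith
  have hIbound : (∫ s in (0:ℝ)..1, (1 - a * s) ^ (-p)) ≤ (2 + 2/(p-1)) * κ ^ (p-1) := by
    rcases le_or_gt κ 2 with hκ2 | hκ2
    · -- crude bound: integrand ≤ κ^p ≤ 2 κ^(p-1)
      have hpt : ∀ s ∈ Set.Icc (0:ℝ) 1, (1 - a * s) ^ (-p) ≤ κ ^ p := by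
        intro s hs
        calc (1 - a * s) ^ (-p) ≤ (1/κ) ^ (-p) :=
              Real.rpow_le_rpow_of_nonpos hκinv (hu s hs) (by linarith)
          _ = κ ^ p := by
              rw [one_div, Real.inv_rpow hκ0.le, Real.rpow_neg hκ0.le, inv_inv]
      have h1 := intervalIntegral.integral_mono_on (by norm_num : (0:ℝ) ≤ 1)
        hgint0 intervalIntegrable_const hpt
      simp only [intervalIntegral.integral_const, smul_eq_mul, sub_zero, one_mul] at h1
      have h2 : κ ^ p = κ * κ ^ (p-1) := by
        rw [show p = 1 + (p-1) by ring, Real.rpow_add hκ0, Real.rpow_one]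
        ring_nf
      have h4 : (0:ℝ) < 2/(p-1) := by positivity
      calc (∫ s in (0:ℝ)..1, (1 - a * s) ^ (-p)) ≤ κ ^ p := h1
        _ ≤ 2 * κ ^ (p-1) := by rw [h2]; nlinarith
        _ ≤ (2 + 2/(p-1)) * κ ^ (p-1) := by nlinarith
    · -- exact computation via substitution
      have ha2 : (1:ℝ)/2 ≤ a := by
        simp only [ha_def]
        have : 1/κ ≤ 1/2 := by
          rw [div_le_div_iff₀ hκ0 (by norm_num)]; linarith
        linarith
      have hapos : (0:ℝ) < a := by linarith
      have hane : a ≠ 0 := ne_of_gt hapos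
      have e2 := intervalIntegral.integral_comp_mul_left
        (a := (0:ℝ)) (b := 1) (f := fun x => (1 - x) ^ (-p)) hane
      have e3 := intervalIntegral.integral_comp_sub_left
        (a := (0:ℝ)) (b := a) (fun x => x ^ (-p)) 1
      have hsub : (∫ s in (0:ℝ)..1, (1 - a * s) ^ (-p))
          = a⁻¹ * ∫ x in (1-a)..1, x ^ (-p) := by
        calc (∫ s in (0:ℝ)..1, (1 - a * s) ^ (-p))
            = a⁻¹ • ∫ x in (a*0)..(a*1), (1 - x) ^ (-p) := e2
          _ = a⁻¹ * ∫ x in (1-a)..1, x ^ (-p) := by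
              rw [mul_zero, mul_one, smul_eq_mul]
              congr 1
              simpa using e3
      have hrpow : (∫ x in (1-a)..1, x ^ (-p))
          = ((1:ℝ) ^ (-p+1) - (1-a) ^ (-p+1)) / (-p+1) := by
        apply integral_rpow
        right
        refine ⟨by intro h; linarith, ?_⟩
        rw [Set.uIcc_of_le (by linarith : 1 - a ≤ 1)]
        intro h
        have := h.1
        simp only [ha_def] at this
        linarith
      have h1a : (1 - a : ℝ) = 1/κ := by simp [ha_def]
      have hval : (1-a : ℝ) ^ (-p+1) = κ ^ (p-1) := by
        rw [h1a, one_div, ← Real.rpow_neg_one κ, ← Real.rpow_mul hκ0.le]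
        congr 1; ring
      rw [hsub, hrpow, Real.one_rpow, hval]
      have hinv2 : a⁻¹ ≤ 2 := by
        rw [show (2:ℝ) = (2⁻¹)⁻¹ by norm_num]
        apply inv_anti₀ (by norm_num)
        linarith
      have hpos : 0 ≤ (1 - κ ^ (p-1)) / (-p+1) := by
        rw [div_nonneg_iff]; right; constructor <;> linarith
      have hstep : (1 - κ ^ (p-1)) / (-p+1) = (κ ^ (p-1) - 1) / (p-1) := by
        rw [show (-p+1 : ℝ) = -(p-1) by ring, div_neg, ← neg_div, neg_sub]
      calc a⁻¹ * ((1 - κ ^ (p-1)) / (-p+1))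
          ≤ 2 * ((1 - κ ^ (p-1)) / (-p+1)) := by nlinarith
        _ = 2 * ((κ ^ (p-1) - 1) / (p-1)) := by rw [hstep]
        _ ≤ 2 * (κ ^ (p-1) / (p-1)) := by gcongr; linarith
        _ = (2/(p-1)) * κ ^ (p-1) := by ring
        _ ≤ (2 + 2/(p-1)) * κ ^ (p-1) := by
            apply mul_le_mul_of_nonneg_right (by linarith) hκpnn
  calc (2:ℝ) ^ (p/2) * ∫ s in (0:ℝ)..1, (1 - a * s) ^ (-p)
      ≤ (2:ℝ) ^ (p/2) * ((2 + 2/(p-1)) * κ ^ (p-1)) :=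
        mul_le_mul_of_nonneg_left hIbound (by positivity)
    _ = (2:ℝ) ^ (p/2) * (2 + 2/(p-1)) * κ ^ (p-1) := by ring
end

section
/- There exists a constant C > 0 such that for all κ ≥ 1: ∫₀¹ ((1 − s)² + (s/κ)²)^{−1/2} ds ≤ C · (1 + log κ). In particular, ∫₀¹ Δ_κ(s)^{−1} ds = O(log κ). -/
/-- QLSP gap integral, `p = 1`: there is `C > 0` with
`∫₀¹ Δ_κ(s)^{−1} ds ≤ C·(1 + log κ)` for all `κ ≥ 1`,
where `Δ_κ(s) = √((1−s)² + (s/κ)²)`. -/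
theorem stmt18 :
    ∃ C > 0, ∀ κ : ℝ, 1 ≤ κ →
      (∫ s in (0:ℝ)..1, ((1 - s) ^ 2 + (s / κ) ^ 2) ^ (-(1:ℝ) / 2)) ≤
        C * (1 + Real.log κ) := by
  refine ⟨2, by norm_num, fun κ hκ => ?_⟩
  have hκ0 : (0:ℝ) < κ := lt_of_lt_of_le one_pos hκ
  have hκ1 : 1/κ ≤ 1 := by rw [div_le_one hκ0]; exact hκ
  have hκp : 0 < 1/κ := by positivity
  set f : ℝ → ℝ := fun s => ((1 - s) ^ 2 + (s / κ) ^ 2) ^ (-(1:ℝ) / 2) with hf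
  -- base is always positive
  have hbase : ∀ s : ℝ, 0 < (1 - s) ^ 2 + (s / κ) ^ 2 := by
    intro s
    rcases eq_or_ne s 1 with h | h
    · subst h
      have h1 : (1:ℝ)/κ ≠ 0 := ne_of_gt hκp
      have : (0:ℝ) < (1/κ)^2 := by positivity
      calc (0:ℝ) < (1/κ)^2 := this
        _ ≤ (1 - 1) ^ 2 + (1 / κ) ^ 2 := by norm_num
    · have h1 : 1 - s ≠ 0 := fun hc => h (by linarith)
      positivity
  have hcont : Continuous f := by
    apply Continuous.rpow_const (by continuity)
    intro s; exact Or.inl (hbase s).ne'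
  set t : ℝ := 1 - 1/κ with ht
  have ht0 : 0 ≤ t := by rw [ht]; linarith
  have ht1 : t ≤ 1 := by rw [ht]; linarith
  -- split the integral
  have hsplit : (∫ s in (0:ℝ)..1, f s)
      = (∫ s in (0:ℝ)..t, f s) + ∫ s in t..1, f s :=
    (intervalIntegral.integral_add_adjacent_intervals
      (hcont.intervalIntegrable _ _) (hcont.intervalIntegrable _ _)).symm
  -- first piece ≤ log κ
  have hA : (∫ s in (0:ℝ)..t, f s) ≤ Real.log κ := by
    have hIg : IntervalIntegrable (fun s => (1 - s)⁻¹) MeasureTheory.volume 0 t := by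
      apply ContinuousOn.intervalIntegrable
      apply ContinuousOn.inv₀ (by fun_prop)
      intro x hx
      rw [Set.uIcc_of_le ht0] at hx
      have hxt : x ≤ t := hx.2
      have : 1/κ ≤ 1 - x := by linarith [hxt, ht ▸ hxt]
      linarith
    have hmono : (∫ s in (0:ℝ)..t, f s) ≤ ∫ s in (0:ℝ)..t, (1 - s)⁻¹ := by
      apply intervalIntegral.integral_mono_on ht0 (hcont.intervalIntegrable _ _) hIg
      intro x hx
      have hx1 : 0 < 1 - x := by
        have hxt : x ≤ t := hx.2
        have : x ≤ 1 - 1/κ := ht ▸ hxt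
        linarith
      have h1 : f x ≤ ((1 - x)^2) ^ (-(1:ℝ)/2) :=
        Real.rpow_le_rpow_of_nonpos (by positivity)
          (le_add_of_nonneg_right (sq_nonneg _)) (by norm_num)
      have h2 : ((1 - x)^2 : ℝ) ^ (-(1:ℝ)/2) = (1 - x)⁻¹ := by
        rw [← Real.rpow_natCast (1 - x) 2, ← Real.rpow_mul hx1.le]
        norm_num [Real.rpow_neg_one]
      rw [h2] at h1; exact h1
    have hval : (∫ s in (0:ℝ)..t, (1 - s)⁻¹) = Real.log κ := by
      have hc := intervalIntegral.integral_comp_sub_left (a := 0) (b := t)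
        (fun x : ℝ => x⁻¹) 1
      rw [hc]
      have h1t : 1 - t = 1/κ := by simp [ht]
      rw [h1t, sub_zero, integral_inv]
      · rw [one_div_one_div]
      · intro hcon
        rw [Set.uIcc_of_le hκ1] at hcon
        exact absurd hcon.1 (by linarith)
    linarith [hmono, hval.le]
  -- second piece ≤ √2
  have hB : (∫ s in t..1, f s) ≤ Real.sqrt 2 := by
    have hbnd : ∀ x ∈ Set.Icc t 1, f x ≤ Real.sqrt 2 * κ := by
      intro x hx
      have hxle : x ≤ 1 := hx.2
      have hsum : 1/κ ≤ (1 - x) + x/κ := by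
        have heq : (1 - x) + x/κ - 1/κ = (1 - x) * (1 - 1/κ) := by ring
        have hnn : 0 ≤ (1 - x) * (1 - 1/κ) :=
          mul_nonneg (by linarith) (by linarith)
        linarith
      have hb2 : 1/(2*κ^2) ≤ (1 - x)^2 + (x/κ)^2 := by
        have hsq : (1/κ)^2 ≤ ((1 - x) + x/κ)^2 := by
          apply pow_le_pow_left₀ hκp.le hsum
        have hinv : (1/κ)^2 = 1/κ^2 := by rw [div_pow]; norm_num
        have heq2 : 1/(2*κ^2) = (1/κ^2)/2 := by ring
        nlinarith [sq_nonneg ((1 - x) - x/κ)]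
      have h1 : f x ≤ (1/(2*κ^2)) ^ (-(1:ℝ)/2) :=
        Real.rpow_le_rpow_of_nonpos (by positivity) hb2 (by norm_num)
      have h2 : ((1/(2*κ^2) : ℝ)) ^ (-(1:ℝ)/2) = Real.sqrt 2 * κ := by
        rw [one_div, show (-(1:ℝ)/2) = -(1/2) by norm_num,
          Real.rpow_neg (by positivity), ← Real.inv_rpow (by positivity), inv_inv,
          ← Real.sqrt_eq_rpow, Real.sqrt_mul (by norm_num), Real.sqrt_sq hκ0.le]
      rw [h2] at h1; exact h1
    have hconst : (∫ s in t..1, f s) ≤ ∫ _ in t..1, Real.sqrt 2 * κ := by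
      apply intervalIntegral.integral_mono_on ht1 (hcont.intervalIntegrable _ _)
        intervalIntegrable_const hbnd
    rw [intervalIntegral.integral_const, smul_eq_mul] at hconst
    have h1t : 1 - t = 1/κ := by simp [ht]
    rw [h1t] at hconst
    calc (∫ s in t..1, f s) ≤ 1/κ * (Real.sqrt 2 * κ) := hconst
      _ = Real.sqrt 2 := by field_simp
  have hsqrt2 : Real.sqrt 2 ≤ 2 := by
    nlinarith [Real.sq_sqrt (by norm_num : (0:ℝ) ≤ 2), Real.sqrt_nonneg 2]
  have hlog : 0 ≤ Real.log κ := Real.log_nonneg hκ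
  calc (∫ s in (0:ℝ)..1, f s) = (∫ s in (0:ℝ)..t, f s) + ∫ s in t..1, f s := hsplit
    _ ≤ Real.log κ + Real.sqrt 2 := add_le_add hA hB
    _ ≤ 2 * (1 + Real.log κ) := by linarith
end
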